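/- arXiv:2011.13068 — 12 statements merged into one kernel-verified Lean document; each statement's English description precedes it below -/
import Mathlib

section
/- The set of primes p such that p divides the denominator of (1/n)·∑_{d|n} μ(n/d)·F_d for some n ∈ ℕ is infinite. Concretely: for every odd prime p with p ≡ ±2 (mod 5), the rational number (1/p)(F_p − F_1) has denominator exactly p. -/
/-!
In `ℤ/p[ω]` with `ω² = ω + 1` one has `ω ^ n = F_{n-1} + F_n ω`, and `s = 2ω - 1` satisfies
`s² = 5`. The Frobenius gives `s ^ p = 2 ω ^ p - 1`, while Euler's criterion gives
`s ^ p = (5 / p) s`; comparing `ω`-coordinates yields `F_p ≡ (5 / p) (mod p)` for odd `p`.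
By quadratic reciprocity `(5 / p) = -1` when `p ≡ ±2 (mod 5)`, so `F_p - F_1 ≡ -2` is prime to `p`
and `(F_p - F_1) / p` has denominator `p`. For prime `n = p` the Möbius sum is `F_p - F_1`, and
Dirichlet's theorem supplies infinitely many primes `p ≡ 3 (mod 5)`.
-/

namespace QuadraticAlgebra

variable {R : Type*} [CommRing R]

instance {a b : R} (p : ℕ) [CharP R p] : CharP (QuadraticAlgebra R a b) p :=
  charP_of_injective_algebraMap algebraMap_injective p

theorem omega_pow_succ_eq_mk_fib (n : ℕ) :
    (ω : QuadraticAlgebra R 1 1) ^ (n + 1) = ⟨Nat.fib n, Nat.fib (n + 1)⟩ := by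
  induction n with
  | zero => ext <;> simp
  | succ n ih =>
    rw [pow_succ', ih, omega_mul_mk, Nat.fib_add_two]
    ext <;> simp

theorem im_omega_pow (n : ℕ) : ((ω : QuadraticAlgebra R 1 1) ^ n).im = Nat.fib n := by
  cases n with
  | zero => simp
  | succ n => rw [omega_pow_succ_eq_mk_fib]

theorem two_omega_sub_one_sq : (2 * ω - 1 : QuadraticAlgebra R 1 1) ^ 2 = 5 := by
  ext <;> simp [sq] <;> ring

end QuadraticAlgebra

open QuadraticAlgebra in
theorem ZMod.fib_prime_eq_legendreSym {p : ℕ} [Fact p.Prime] (hp : p ≠ 2) :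
    (Nat.fib p : ZMod p) = legendreSym p 5 := by
  set s : QuadraticAlgebra (ZMod p) 1 1 := 2 * ω - 1
  have hfrob : s ^ p = 2 * ω ^ p - 1 := by
    rw [sub_pow_char, mul_pow, one_pow, ← map_ofNat (algebraMap (ZMod p) _), ← map_pow,
      ZMod.pow_card]
  have heuler : s ^ p = algebraMap (ZMod p) _ (legendreSym p 5) * s :=
    calc s ^ p = (s ^ 2) ^ (p / 2) * s := by
          rw [← pow_mul, ← pow_succ, Nat.two_mul_div_two_add_one_of_odd
            ((Fact.out : p.Prime).odd_of_ne_two hp)]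
      _ = _ := by
          rw [two_omega_sub_one_sq, legendreSym.eq_pow, map_pow, Int.cast_ofNat, map_ofNat]
  have him : (2 : ZMod p) * Nat.fib p = 2 * legendreSym p 5 := by
    simpa [s, im_omega_pow, mul_comm] using congrArg im (hfrob.symm.trans heuler)
  exact mul_left_cancel₀ (Ring.two_ne_zero ((ZMod.ringChar_zmod_n p).symm ▸ hp)) him

theorem legendreSym_five_eq_neg_one {p : ℕ} [Fact p.Prime] (hp : p ≠ 2)
    (h5 : p % 5 = 2 ∨ p % 5 = 3) : legendreSym p 5 = -1 := by
  have hodd : Odd p := (Fact.out : p.Prime).odd_of_ne_two hp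
  rw [jacobiSym.legendreSym.to_jacobiSym, ← Nat.cast_ofNat,
    jacobiSym.quadratic_reciprocity_one_mod_four (by norm_num) hodd, jacobiSym.mod_left,
    ← Int.natCast_mod]
  rcases h5 with h | h <;> rw [h] <;> norm_num

theorem Rat.den_intCast_div_prime {p : ℕ} (hp : p.Prime) {a : ℤ} (ha : ¬(p : ℤ) ∣ a) :
    ((a : ℚ) / p).den = p := by
  have hcop : a.natAbs.Coprime (p : ℤ).natAbs :=
    ((hp.coprime_iff_not_dvd).mpr (Int.natCast_dvd.not.mp ha)).symm
  exact_mod_cast Rat.den_div_eq_of_coprime (by exact_mod_cast hp.pos) hcop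

open ArithmeticFunction ArithmeticFunction.Moebius in
theorem Nat.Prime.sum_divisors_moebius_mul {R : Type*} [CommRing R] {p : ℕ} (hp : p.Prime)
    (f : ℕ → R) : ∑ d ∈ p.divisors, (μ (p / d) : R) * f d = f p - f 1 := by
  rw [hp.sum_divisors, Nat.div_self hp.pos, Nat.div_one, moebius_apply_prime hp,
    moebius_apply_one]
  push_cast
  ring

theorem den_fib_prime_sub_fib_one_div_prime {p : ℕ} (hp : p.Prime) (hp2 : p ≠ 2)
    (h5 : p % 5 = 2 ∨ p % 5 = 3) : (((Nat.fib p : ℚ) - Nat.fib 1) / p).den = p := by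
  have := Fact.mk hp
  have hfib : (Nat.fib p : ZMod p) = -1 := by
    rw [ZMod.fib_prime_eq_legendreSym hp2, legendreSym_five_eq_neg_one hp2 h5, Int.cast_neg,
      Int.cast_one]
  have hndvd : ¬(p : ℤ) ∣ (Nat.fib p - Nat.fib 1 : ℤ) := by
    rw [← ZMod.intCast_zmod_eq_zero_iff_dvd]
    push_cast
    rw [hfib, Nat.fib_one, Nat.cast_one, ← neg_add', one_add_one_eq_two]
    exact neg_ne_zero.mpr <| Ring.two_ne_zero ((ZMod.ringChar_zmod_n p).symm ▸ hp2)
  exact_mod_cast Rat.den_intCast_div_prime hp hndvd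

open ArithmeticFunction ArithmeticFunction.Moebius in
theorem fib_dold_denominators_infinite :
    {p : ℕ | p.Prime ∧ ∃ n : ℕ, 0 < n ∧
      (p : ℤ) ∣ ((((∑ d ∈ n.divisors, (μ (n / d) : ℚ) * Nat.fib d) / n : ℚ)).den : ℤ)}.Infinite
    ∧
    ∀ p : ℕ, p.Prime → Odd p → (p % 5 = 2 ∨ p % 5 = 3) →
      ((((Nat.fib p : ℚ) - Nat.fib 1) / p).den) = p := by
  refine ⟨?_, fun p hp hodd h5 =>
    den_fib_prime_sub_fib_one_div_prime hp (hodd.ne_two_of_dvd_nat dvd_rfl) h5⟩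
  refine (Nat.infinite_setOfPred_prime_and_eq_mod (q := 5) (a := 3) (by decide)).mono ?_
  rintro p ⟨hp, hp3⟩
  have h5 : p % 5 = 3 := by
    rwa [← Nat.cast_ofNat (R := ZMod 5) (n := 3), ZMod.natCast_eq_natCast_iff'] at hp3
  have hp2 : p ≠ 2 := by rintro rfl; norm_num at h5
  refine ⟨hp, p, hp.pos, ?_⟩
  rw [hp.sum_divisors_moebius_mul, den_fib_prime_sub_fib_one_div_prime hp hp2 (.inr h5)]
end

section
/- For any prime p and any n ∈ ℕ, there exists an integer s with 0 ≤ s < n such that ℓ(p^n) = p^s · ℓ(p). -/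
/-- The period of the Fibonacci sequence modulo `m`: the least `d > 0` such that
`F (n + d) ≡ F n (mod m)` for all `n`. -/
noncomputable def fibPeriod (m : ℕ) : ℕ :=
  sInf {d : ℕ | 0 < d ∧ ∀ n : ℕ, Nat.fib (n + d) ≡ Nat.fib n [MOD m]}

def IsFibPeriod (m d : ℕ) : Prop := ∀ n : ℕ, Nat.fib (n + d) ≡ Nat.fib n [MOD m]

lemma isFibPeriod_of_cond {m d : ℕ} (h0 : Nat.fib d ≡ 0 [MOD m])
    (h1 : Nat.fib (d + 1) ≡ 1 [MOD m]) : IsFibPeriod m d := by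
  have key : ∀ n, Nat.fib (n + d) ≡ Nat.fib n [MOD m] ∧
      Nat.fib (n + 1 + d) ≡ Nat.fib (n + 1) [MOD m] := by
    intro n
    induction n with
    | zero =>
      constructor
      · simpa using h0
      · simpa [Nat.add_comm] using h1
    | succ k ih =>
      refine ⟨ih.2, ?_⟩
      have hadd := ih.1.add ih.2
      have e1 : Nat.fib (k + d) + Nat.fib (k + 1 + d) = Nat.fib (k + 1 + 1 + d) := by
        rw [show k + 1 + 1 + d = (k + d) + 2 by omega, Nat.fib_add_two,
          show k + 1 + d = (k + d) + 1 by omega]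
      have e2 : Nat.fib k + Nat.fib (k + 1) = Nat.fib (k + 1 + 1) := by
        rw [show k + 1 + 1 = k + 2 by omega, Nat.fib_add_two]
      rw [e1, e2] at hadd
      exact hadd
  exact fun n => (key n).1

lemma isFibPeriod_back {m d a : ℕ} (h1 : Nat.fib (a + 1 + d) ≡ Nat.fib (a + 1) [MOD m])
    (h2 : Nat.fib (a + 2 + d) ≡ Nat.fib (a + 2) [MOD m]) :
    Nat.fib (a + d) ≡ Nat.fib a [MOD m] := by
  have key : Nat.fib (a + d) + Nat.fib (a + 1 + d) ≡ Nat.fib a + Nat.fib (a + 1) [MOD m] := by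
    have e1 : Nat.fib (a + d) + Nat.fib (a + 1 + d) = Nat.fib (a + 2 + d) := by
      rw [show a + 2 + d = (a + d) + 2 by omega, Nat.fib_add_two,
        show a + 1 + d = (a + d) + 1 by omega]
    have e2 : Nat.fib a + Nat.fib (a + 1) = Nat.fib (a + 2) := (Nat.fib_add_two).symm
    rw [e1, e2]
    exact h2
  exact h1.add_right_cancel key

lemma exists_isFibPeriod (m : ℕ) (hm : m ≠ 0) : ∃ d, 0 < d ∧ IsFibPeriod m d := by
  haveI : NeZero m := ⟨hm⟩
  obtain ⟨i, j, hne, hij⟩ := Finite.exists_ne_map_eq_of_infinite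
    (fun n : ℕ => ((Nat.fib n : ZMod m), (Nat.fib (n + 1) : ZMod m)))
  wlog hlt : i < j generalizing i j
  · exact this j i hne.symm hij.symm (by omega)
  set d := j - i with hd
  have hji : j = i + d := by omega
  have h1 : Nat.fib (i + d) ≡ Nat.fib i [MOD m] := by
    have := congrArg Prod.fst hij
    simp only at this
    rw [← hji]
    exact ((ZMod.natCast_eq_natCast_iff _ _ _).mp this.symm)
  have h2 : Nat.fib (i + 1 + d) ≡ Nat.fib (i + 1) [MOD m] := by
    have := congrArg Prod.snd hij
    simp only at this
    rw [show i + 1 + d = j + 1 by omega]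
    exact ((ZMod.natCast_eq_natCast_iff _ _ _).mp this.symm)
  have pairs : ∀ t, Nat.fib (i - t + d) ≡ Nat.fib (i - t) [MOD m] ∧
      Nat.fib (i - t + 1 + d) ≡ Nat.fib (i - t + 1) [MOD m] := by
    intro t
    induction t with
    | zero => simpa using ⟨h1, h2⟩
    | succ t ih =>
      rcases Nat.eq_zero_or_pos (i - t) with h0 | hpos
      · rw [show i - (t + 1) = i - t by omega]
        exact ih
      · have ha1 : i - (t + 1) + 1 = i - t := by omega
        have ha2 : i - (t + 1) + 2 = i - t + 1 := by omega
        refine ⟨isFibPeriod_back ?_ ?_, ?_⟩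
        · rw [ha1]; exact ih.1
        · rw [ha2]; exact ih.2
        · rw [ha1]; exact ih.1
  have h0 := pairs i
  rw [Nat.sub_self] at h0
  refine ⟨d, by omega, isFibPeriod_of_cond ?_ ?_⟩
  · simpa using h0.1
  · simpa [Nat.add_comm] using h0.2

lemma fibPeriod_spec (m : ℕ) (hm : m ≠ 0) :
    0 < fibPeriod m ∧ IsFibPeriod m (fibPeriod m) := by
  obtain ⟨d, hd, hper⟩ := exists_isFibPeriod m hm
  have hne : {d : ℕ | 0 < d ∧ ∀ n : ℕ, Nat.fib (n + d) ≡ Nat.fib n [MOD m]}.Nonempty :=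
    ⟨d, hd, hper⟩
  have := Nat.sInf_mem hne
  exact ⟨this.1, this.2⟩

lemma IsFibPeriod.sub {m d e : ℕ} (hd : IsFibPeriod m d) (he : IsFibPeriod m e)
    (hde : d ≤ e) : IsFibPeriod m (e - d) := by
  intro n
  have h1 := hd (n + (e - d))
  have h2 := he n
  rw [show n + (e - d) + d = n + e by omega] at h1
  exact h1.symm.trans h2

lemma fibPeriod_dvd {m : ℕ} (hm : m ≠ 0) {e : ℕ} (he : IsFibPeriod m e) :
    fibPeriod m ∣ e := by
  obtain ⟨hLpos, hLper⟩ := fibPeriod_spec m hm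
  revert he
  induction e using Nat.strong_induction_on with
  | _ e ih =>
    intro he
    rcases Nat.eq_zero_or_pos e with rfl | hepos
    · exact dvd_zero _
    · have hLe : fibPeriod m ≤ e := Nat.sInf_le ⟨hepos, he⟩
      have hsub : IsFibPeriod m (e - fibPeriod m) := hLper.sub he hLe
      have h2 : fibPeriod m ∣ e - fibPeriod m := ih _ (by omega) hsub
      have : e = (e - fibPeriod m) + fibPeriod m := by omega
      rw [this]
      exact Nat.dvd_add h2 dvd_rfl

lemma isFibPeriod_pow_succ {p k d : ℕ} (hp : p.Prime) (hk : 1 ≤ k) (hd : 0 < d)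
    (h : IsFibPeriod (p ^ k) d) : IsFibPeriod (p ^ (k + 1)) (p * d) := by
  have h0 : Nat.fib d ≡ 0 [MOD p ^ k] := by simpa using h 0
  have h1 : Nat.fib (d + 1) ≡ 1 [MOD p ^ k] := by simpa [Nat.add_comm] using h 1
  set a : ℤ := (Nat.fib d : ℤ) with ha_def
  set c : ℤ := (Nat.fib (d + 1) : ℤ) with hc_def
  have ha : ((p : ℤ)) ^ k ∣ a := by
    have := Nat.modEq_zero_iff_dvd.mp h0
    have := Int.natCast_dvd_natCast.mpr this
    push_cast at this
    exact this
  have hc : ((p : ℤ)) ^ k ∣ c - 1 := by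
    have := (Nat.modEq_iff_dvd).mp h1
    push_cast at this
    exact dvd_sub_comm.mp this
  -- main induction: fib((j+1)d) = (j+1) a c^j  and  fib((j+1)d+1) = c^(j+1), modulo a^2
  have main : ∀ j : ℕ, ∃ x y : ℤ,
      ((Nat.fib ((j + 1) * d) : ℤ) = ((j : ℤ) + 1) * a * c ^ j + a ^ 2 * x) ∧
      ((Nat.fib ((j + 1) * d + 1) : ℤ) = c ^ (j + 1) + a ^ 2 * y) := by
    intro j
    induction j with
    | zero => exact ⟨0, 0, by simp [ha_def], by simp [hc_def]⟩
    | succ t ih =>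
      obtain ⟨x, y, hx, hy⟩ := ih
      have hfd1 : (Nat.fib (d - 1) : ℤ) = c - a := by
        have hrec : Nat.fib (d - 1) + Nat.fib d = Nat.fib (d + 1) := by
          rw [show d + 1 = (d - 1) + 2 by omega, Nat.fib_add_two,
            show d - 1 + 1 = d by omega]
        have := congrArg (fun z : ℕ => (z : ℤ)) hrec
        push_cast at this
        rw [ha_def, hc_def]
        omega
      refine ⟨x * (c - a) - ((t : ℤ) + 1) * c ^ t + y * a, ((t : ℤ) + 1) * c ^ t + a * x + y * c, ?_, ?_⟩
      · have e2 : (t + 1 + 1) * d = (t + 1) * d + (d - 1) + 1 := by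
          have : (t + 1 + 1) * d = (t + 1) * d + d := by ring
          omega
        rw [e2, Nat.fib_add, show d - 1 + 1 = d by omega]
        push_cast
        rw [hx, hy, hfd1]
        ring
      · have e1 : (t + 1 + 1) * d + 1 = (t + 1) * d + d + 1 := by ring
        rw [e1, Nat.fib_add]
        push_cast
        rw [hx, hy]
        ring
  obtain ⟨x, y, hx, hy⟩ := main (p - 1)
  have hpp : p - 1 + 1 = p := Nat.succ_pred_eq_of_pos hp.pos
  rw [hpp] at hx hy
  have hcoef : ((p - 1 : ℕ) : ℤ) + 1 = (p : ℤ) := by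
    rw [Nat.cast_sub hp.one_le]; ring
  rw [hcoef] at hx
  obtain ⟨A, hA⟩ := ha
  obtain ⟨B, hB⟩ := hc
  have hpow2 : ((p : ℤ)) ^ (k + 1) ∣ ((p : ℤ) ^ k) ^ 2 := by
    rw [← pow_mul]
    exact pow_dvd_pow _ (by omega)
  have hasq : ((p : ℤ)) ^ (k + 1) ∣ a ^ 2 := by
    rw [hA]
    have : ((p : ℤ) ^ k * A) ^ 2 = ((p : ℤ) ^ k) ^ 2 * A ^ 2 := by ring
    rw [this]
    exact hpow2.mul_right _
  have hdvd1 : ((p : ℤ)) ^ (k + 1) ∣ (Nat.fib (p * d) : ℤ) := by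
    rw [hx, hA]
    refine dvd_add ⟨A * c ^ (p - 1), by ring⟩ ?_
    have : ((p : ℤ) ^ k * A) ^ 2 * x = ((p : ℤ) ^ k) ^ 2 * (A ^ 2 * x) := by ring
    rw [this]
    exact hpow2.mul_right _
  have hdvd2 : ((p : ℤ)) ^ (k + 1) ∣ (Nat.fib (p * d + 1) : ℤ) - 1 := by
    -- c ^ p = 1 + p * (c - 1) + (c - 1)^2 * z
    have hbin : ∀ n : ℕ, ∃ z : ℤ, c ^ n = 1 + (n : ℤ) * (c - 1) + (c - 1) ^ 2 * z := by
      intro n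
      induction n with
      | zero => exact ⟨0, by simp⟩
      | succ t ih =>
        obtain ⟨z, hz⟩ := ih
        refine ⟨(t : ℤ) + z * c, ?_⟩
        have : c ^ (t + 1) = c ^ t * c := by ring
        rw [this, hz]
        push_cast
        ring
    obtain ⟨z, hz⟩ := hbin p
    rw [hy, hz]
    have h1 : ((p : ℤ)) ^ (k + 1) ∣ (p : ℤ) * (c - 1) := by
      rw [hB]
      exact ⟨B, by ring⟩
    have h2 : ((p : ℤ)) ^ (k + 1) ∣ (c - 1) ^ 2 * z := by
      rw [hB]
      have : ((p : ℤ) ^ k * B) ^ 2 * z = ((p : ℤ) ^ k) ^ 2 * (B ^ 2 * z) := by ring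
      rw [this]
      exact hpow2.mul_right _
    have h3 : ((p : ℤ)) ^ (k + 1) ∣ a ^ 2 * y := hasq.mul_right _
    have : 1 + (p : ℤ) * (c - 1) + (c - 1) ^ 2 * z + a ^ 2 * y - 1 =
        (p : ℤ) * (c - 1) + (c - 1) ^ 2 * z + a ^ 2 * y := by ring
    rw [this]
    exact dvd_add (dvd_add h1 h2) h3
  refine isFibPeriod_of_cond ?_ ?_
  · rw [Nat.modEq_zero_iff_dvd]
    exact_mod_cast hdvd1
  · rw [Nat.modEq_iff_dvd]
    push_cast
    exact dvd_sub_comm.mp hdvd2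

theorem fibPeriod_prime_pow_eq (p : ℕ) (hp : p.Prime) (n : ℕ) (hn : 0 < n) :
    ∃ s : ℕ, s < n ∧ fibPeriod (p ^ n) = p ^ s * fibPeriod p := by
  induction n with
  | zero => omega
  | succ n ih =>
    rcases Nat.eq_zero_or_pos n with rfl | hn'
    · exact ⟨0, by omega, by simp⟩
    obtain ⟨s, hs, hsep⟩ := ih hn'
    have hpk1 : (p ^ (n + 1)) ≠ 0 := pow_ne_zero _ hp.pos.ne'
    have hpkn : (p ^ n) ≠ 0 := pow_ne_zero _ hp.pos.ne'
    obtain ⟨hpos1, hper1⟩ := fibPeriod_spec (p ^ (n + 1)) hpk1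
    obtain ⟨hposn, hpern⟩ := fibPeriod_spec (p ^ n) hpkn
    have hdown : IsFibPeriod (p ^ n) (fibPeriod (p ^ (n + 1))) :=
      fun t => (hper1 t).of_dvd (pow_dvd_pow p (by omega))
    have hdvd1 : fibPeriod (p ^ n) ∣ fibPeriod (p ^ (n + 1)) := fibPeriod_dvd hpkn hdown
    have hstep : IsFibPeriod (p ^ (n + 1)) (p * fibPeriod (p ^ n)) :=
      isFibPeriod_pow_succ hp hn' hposn hpern
    have hdvd2 : fibPeriod (p ^ (n + 1)) ∣ p * fibPeriod (p ^ n) := fibPeriod_dvd hpk1 hstep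
    obtain ⟨t, ht⟩ := hdvd1
    have htp : t ∣ p := by
      have h' : fibPeriod (p ^ n) * t ∣ fibPeriod (p ^ n) * p := by
        rw [← ht, Nat.mul_comm (fibPeriod (p ^ n)) p]
        exact hdvd2
      exact (Nat.mul_dvd_mul_iff_left hposn).mp h'
    rcases (Nat.Prime.eq_one_or_self_of_dvd hp t htp) with rfl | rfl
    · exact ⟨s, by omega, by rw [ht, Nat.mul_one, hsep]⟩
    · exact ⟨s + 1, by omega, by rw [ht, hsep]; ring⟩
end

section
/- For any prime p, any integer k ≥ 2, and any non-negative integer c, we have F_{p^{2k}+c} ≡ F_{p^{2(k−1)}+c} (mod p^k). -/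
/-!
Work in `ℤ[φ] = ℤ[X]/(X² - X - 1)`, where `φ ^ (n + 1) = F (n + 1) * φ + F n`. Modulo an odd
prime `p`, the element `d = 2φ - 1` squares to `5`, so Frobenius acts on `d` by the scalar
`5 ^ ((p - 1) / 2)`, whose cube is itself; this gives `φ ^ p³ = φ ^ p`, i.e. `p ∣ φ ^ N - 1`
for `N = p (p² - 1)` (for `p = 2`, already `φ³ ≡ 1`). Lifting the exponent gives
`p ^ k ∣ φ ^ (N p ^ (k - 1)) - 1`, so `p ^ (2 (k - 1)) (p² - 1) = p ^ (2k) - p ^ (2 (k - 1))`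
is a period of `F` modulo `p ^ k`, and comparing coordinates in the basis `φ, 1` turns this
into the congruence.
-/

open Polynomial AdjoinRoot

theorem pow_succ_eq_fib_mul_add_fib {R : Type*} [CommRing R] {x : R} (hx : x ^ 2 = x + 1)
    (n : ℕ) : x ^ (n + 1) = Nat.fib (n + 1) * x + Nat.fib n := by
  induction n with
  | zero => simp
  | succ n ih =>
    rw [pow_succ, ih, Nat.fib_add_two]
    push_cast
    linear_combination (Nat.fib (n + 1) : R) * hx

section CharP

variable {R : Type*} [CommRing R] {p : ℕ} [Fact p.Prime] [CharP R p]

theorem natCast_pow_char (n : ℕ) : (n : R) ^ p = n := by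
  rw [← frobenius_def, map_natCast]

variable {x : R}

theorem pow_char_pow_three_eq_pow_char (hp : Odd p) (hx : x ^ 2 = x + 1) :
    x ^ p ^ 3 = x ^ p := by
  have hp3 : 3 ≤ p :=
    (Fact.out : p.Prime).two_le.lt_of_ne (by rintro rfl; exact absurd hp (by decide))
  have hp_odd : p % 2 = 1 := Nat.odd_iff.mp hp
  have frob (y : R) : (2 * y - 1) ^ p = 2 * y ^ p - 1 := by
    rw [sub_pow_char, mul_pow, one_pow, ← Nat.cast_ofNat, natCast_pow_char]
  set d := 2 * x - 1
  have hd : d ^ 2 = 5 := by linear_combination 4 * hx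
  set e : R := 5 ^ (p / 2)
  have hdp : d ^ p = e * d := by
    rw [← Nat.two_mul_div_two_add_one_of_odd hp, pow_succ, pow_mul, hd]
  have he : e ^ p = e := by
    simpa only [e, Nat.cast_pow, Nat.cast_ofNat] using natCast_pow_char (R := R) (5 ^ (p / 2))
  have h5 : (5 : R) ^ p = 5 := by
    simpa only [Nat.cast_ofNat] using natCast_pow_char (R := R) 5
  have he3 : e ^ 3 = e := by
    calc e ^ 3 = 5 ^ (p / 2 - 1) * 5 ^ p := by rw [← pow_mul, ← pow_add]; congr 1; omega
      _ = e := by rw [h5, ← pow_succ]; congr 1; omega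
  have hdp3 : d ^ p ^ 3 = d ^ p := by
    calc d ^ p ^ 3 = ((d ^ p) ^ p) ^ p := by ring
      _ = e ^ 3 * d := by rw [hdp, mul_pow, he, hdp, mul_pow, mul_pow, he, hdp]; ring
      _ = d ^ p := by rw [he3, hdp]
  have h2 : IsUnit (2 : R) := by
    refine IsUnit.of_mul_eq_one ((p / 2 + 1 : ℕ) : R) ?_
    have : ((2 * (p / 2 + 1) : ℕ) : R) = 1 := by
      rw [show 2 * (p / 2 + 1) = p + 1 by omega, Nat.cast_add, CharP.cast_eq_zero, zero_add,
        Nat.cast_one]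
    exact_mod_cast this
  have key : 2 * x ^ p ^ 3 - 1 = 2 * x ^ p - 1 := by
    calc 2 * x ^ p ^ 3 - 1 = 2 * ((x ^ p) ^ p) ^ p - 1 := by ring
      _ = d ^ p ^ 3 := by rw [← frob, ← frob, ← frob]; ring
      _ = 2 * x ^ p - 1 := by rw [hdp3, frob]
  exact h2.mul_left_cancel (by linear_combination key)

theorem pow_mul_sq_sub_one_eq_one_of_sq_eq_add_one (hx : x ^ 2 = x + 1) :
    x ^ (p * (p ^ 2 - 1)) = 1 := by
  rcases (Fact.out : p.Prime).eq_two_or_odd' with rfl | hp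
  · have h2 : (2 : R) = 0 := by exact_mod_cast CharP.cast_eq_zero R 2
    have hx3 : x ^ 3 = 1 := by linear_combination (x + 1) * hx + x * h2
    rw [show 2 * (2 ^ 2 - 1) = 3 * 2 by rfl, pow_mul, hx3, one_pow]
  · have hu : IsUnit x := IsUnit.of_mul_eq_one (x - 1) (by linear_combination hx)
    have hexp : p + p * (p ^ 2 - 1) = p ^ 3 := by
      have := Nat.one_le_pow 2 p (Fact.out : p.Prime).pos
      zify [this]; ring
    refine (hu.pow p).mul_left_cancel ?_
    rw [← pow_add, hexp, mul_one, pow_char_pow_three_eq_pow_char hp hx]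

end CharP

theorem root_sq_eq_root_add_one {R : Type*} [CommRing R] :
    root (X ^ 2 - X - 1 : R[X]) ^ 2 = root (X ^ 2 - X - 1 : R[X]) + 1 := by
  have h := eval₂_root (X ^ 2 - X - 1 : R[X])
  simp only [eval₂_sub, eval₂_pow, eval₂_X, eval₂_one] at h
  linear_combination h

local notation "𝔸" => AdjoinRoot (X ^ 2 - X - 1 : ℤ[X])
local notation "φ" => AdjoinRoot.root (X ^ 2 - X - 1 : ℤ[X])

theorem dvd_of_intCast_dvd_mul_root_add {m a b : ℤ} (h : (m : 𝔸) ∣ (a : 𝔸) * φ + (b : 𝔸)) :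
    m ∣ a ∧ m ∣ b := by
  have hg : (X ^ 2 - X - 1 : ℤ[X]).Monic := by monicity!
  obtain ⟨w, hw⟩ := h
  set q := AdjoinRoot.modByMonicHom hg w
  have hmk : (a : 𝔸) * φ + (b : 𝔸) = mk _ (C a * X + C b) := by simp
  have hcoord : C a * X + C b = m • q := by
    rw [← map_zsmul, zsmul_eq_mul, ← hw, hmk, modByMonicHom_mk, (modByMonic_eq_self_iff hg).2]
    rw [show (X ^ 2 - X - 1 : ℤ[X]).degree = 2 by compute_degree!]
    exact degree_linear_lt
  have hcoeff (n : ℕ) := congrArg (coeff · n) hcoord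
  simp only [coeff_add, coeff_C_mul_X, coeff_C, coeff_smul, smul_eq_mul] at hcoeff
  exact ⟨⟨q.coeff 1, by simpa using hcoeff 1⟩, ⟨q.coeff 0, by simpa using hcoeff 0⟩⟩

theorem prime_dvd_root_pow_sub_one {p : ℕ} (hp : p.Prime) :
    (p : 𝔸) ∣ φ ^ (p * (p ^ 2 - 1)) - 1 := by
  have := Fact.mk hp
  set I := Ideal.span {(p : 𝔸)}
  have hI : I ≠ ⊤ := by
    rw [Ne, Ideal.eq_top_iff_one, Ideal.mem_span_singleton]
    intro h
    have hdvd := (dvd_of_intCast_dvd_mul_root_add (m := p) (a := 0) (b := 1) (by simpa using h)).2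
    exact hp.one_lt.ne' (by exact_mod_cast Int.eq_one_of_dvd_one (by positivity) hdvd)
  have := Ideal.Quotient.nontrivial_iff.2 hI
  have : CharP (𝔸 ⧸ I) p := (CharP.charP_iff_prime_eq_zero hp).2 <| by
    rw [← map_natCast (Ideal.Quotient.mk I), Ideal.Quotient.eq_zero_iff_dvd]
  rw [← Ideal.Quotient.eq_zero_iff_dvd, map_sub, map_pow, map_one, sub_eq_zero]
  refine pow_mul_sq_sub_one_eq_one_of_sq_eq_add_one ?_
  rw [← map_pow, root_sq_eq_root_add_one, map_add, map_one]

theorem fib_add_modEq_of_dvd_root_pow_sub_one {m N : ℕ} (h : (m : 𝔸) ∣ φ ^ N - 1) (c : ℕ) :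
    Nat.fib (N + c) ≡ Nat.fib c [MOD m] := by
  have hdiff : (m : 𝔸) ∣ φ ^ (N + c + 1) - φ ^ (c + 1) := by
    rw [show φ ^ (N + c + 1) - φ ^ (c + 1) = φ ^ (c + 1) * (φ ^ N - 1) by ring]
    exact h.mul_left _
  rw [pow_succ_eq_fib_mul_add_fib root_sq_eq_root_add_one,
    pow_succ_eq_fib_mul_add_fib root_sq_eq_root_add_one] at hdiff
  have hfib := (dvd_of_intCast_dvd_mul_root_add (m := m)
    (a := Nat.fib (N + c + 1) - Nat.fib (c + 1)) (b := Nat.fib (N + c) - Nat.fib c)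
    (by push_cast; convert hdiff using 1; ring)).2
  exact (Nat.modEq_iff_dvd.2 hfib).symm

theorem fib_prime_even_power_add_cong (p : ℕ) (hp : p.Prime) (k : ℕ) (hk : 2 ≤ k) (c : ℕ) :
    Nat.fib (p ^ (2 * k) + c) ≡ Nat.fib (p ^ (2 * (k - 1)) + c) [MOD p ^ k] := by
  obtain ⟨j, rfl⟩ : ∃ j, k = j + 2 := ⟨k - 2, by omega⟩
  have hlift : ((p ^ (j + 2) : ℕ) : 𝔸) ∣ φ ^ (p * (p ^ 2 - 1) * p ^ (j + 1)) - 1 := by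
    simpa [pow_mul] using dvd_sub_pow_of_dvd_sub (prime_dvd_root_pow_sub_one hp) (j + 1)
  have hperiod : ((p ^ (j + 2) : ℕ) : 𝔸) ∣ φ ^ (p ^ (2 * (j + 1)) * (p ^ 2 - 1)) - 1 := by
    refine hlift.trans ?_
    rw [show p ^ (2 * (j + 1)) * (p ^ 2 - 1) = p * (p ^ 2 - 1) * p ^ (j + 1) * p ^ j by ring,
      pow_mul φ _ (p ^ j)]
    exact sub_one_dvd_pow_sub_one _ _
  have hexp : p ^ (2 * (j + 2)) = p ^ (2 * (j + 1)) * (p ^ 2 - 1) + p ^ (2 * (j + 1)) := by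
    have := Nat.one_le_pow 2 p hp.pos
    zify [this]; ring
  rw [hexp, add_assoc, show j + 2 - 1 = j + 1 by omega]
  exact fib_add_modEq_of_dvd_root_pow_sub_one hperiod _
end

section
/- For any prime p and any non-negative integer n, F_{np} ≡ F_n · F_p (mod p). -/
open Matrix

/-- In any ring, if `u ^ 2 = u + 1` then `u ^ (n+1) = fib (n+1) * u + fib n`. -/
lemma fib_pow_aux {R : Type*} [Ring R] (u : R) (h : u ^ 2 = u + 1) :
    ∀ n : ℕ, u ^ (n + 1) = (Nat.fib (n + 1) : R) * u + (Nat.fib n : R) := by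
  intro n
  induction n with
  | zero => simp
  | succ m ih =>
    have hc : Commute ((Nat.fib (m + 1) : R)) u := Nat.cast_commute _ _
    calc u ^ (m + 2) = ((Nat.fib (m + 1) : R) * u + (Nat.fib m : R)) * u := by
          rw [pow_succ, ih]
      _ = (Nat.fib (m + 1) : R) * (u ^ 2) + (Nat.fib m : R) * u := by
          rw [pow_two, add_mul, mul_assoc]
      _ = (Nat.fib (m + 1) : R) * (u + 1) + (Nat.fib m : R) * u := by rw [h]
      _ = ((Nat.fib (m + 1) : R) + (Nat.fib m : R)) * u + (Nat.fib (m + 1) : R) := by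
          rw [mul_add, add_mul, mul_one]; abel
      _ = (Nat.fib (m + 2) : R) * u + (Nat.fib (m + 1) : R) := by
          rw [Nat.fib_add_two, Nat.cast_add, add_comm ((Nat.fib m : R))]

/-- A 2×2 matrix with trace 1 and determinant -1 satisfies `A ^ 2 = A + 1`. -/
lemma sq_eq_add_one_of_trace_det {K : Type*} [CommRing K]
    (A : Matrix (Fin 2) (Fin 2) K) (ht : trace A = 1) (hd : det A = -1) :
    A ^ 2 = A + 1 := by
  rw [trace_fin_two] at ht
  rw [det_fin_two] at hd
  rw [pow_two, eta_fin_two A, one_fin_two, Matrix.mul_fin_two]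
  ext i j
  fin_cases i <;> fin_cases j <;> simp
  · linear_combination A 0 0 * ht - hd
  · linear_combination A 0 1 * ht
  · linear_combination A 1 0 * ht
  · linear_combination A 1 1 * ht - hd

theorem fib_mul_prime_cong (p : ℕ) (hp : p.Prime) (n : ℕ) :
    Nat.fib (n * p) ≡ Nat.fib n * Nat.fib p [MOD p] := by
  haveI : Fact p.Prime := ⟨hp⟩
  rcases n with _ | m
  · simp [Nat.ModEq]
  -- work over ZMod p with the Fibonacci matrix
  set K := ZMod p
  set M : Matrix (Fin 2) (Fin 2) K := !![1, 1; 1, 0] with hM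
  have hM2 : M ^ 2 = M + 1 := by
    apply sq_eq_add_one_of_trace_det <;> simp [hM, trace_fin_two, det_fin_two]
  set A : Matrix (Fin 2) (Fin 2) K := M ^ p with hA
  have htA : trace A = 1 := by
    rw [hA, ZMod.trace_pow_card, trace_fin_two]
    simp [hM]
  have hdA : det A = -1 := by
    rw [hA, det_pow, det_fin_two]
    simp only [hM]
    norm_num
    exact neg_one_pow_char K p
  have hA2 : A ^ 2 = A + 1 := sq_eq_add_one_of_trace_det A htA hdA
  -- two expressions for M ^ ((m+1)*p)
  have hMp : A = (Nat.fib p : Matrix (Fin 2) (Fin 2) K) * M + (Nat.fib (p - 1) : _) := by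
    have hp1 : p - 1 + 1 = p := Nat.succ_pred_eq_of_pos hp.pos
    have h := fib_pow_aux M hM2 (p - 1)
    rw [hp1] at h
    rw [hA, h]
  have key : M ^ ((m + 1) * p) =
      (Nat.fib (m + 1) : Matrix (Fin 2) (Fin 2) K) * A + (Nat.fib m : _) := by
    rw [mul_comm, pow_mul, ← hA, fib_pow_aux A hA2]
  have h1 : (m + 1) * p - 1 + 1 = (m + 1) * p :=
    Nat.succ_pred_eq_of_pos (Nat.mul_pos m.succ_pos hp.pos)
  have key2 : M ^ ((m + 1) * p) =
      (Nat.fib ((m + 1) * p) : Matrix (Fin 2) (Fin 2) K) * M + (Nat.fib ((m + 1) * p - 1) : _) := by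
    have h := fib_pow_aux M hM2 ((m + 1) * p - 1)
    rw [h1] at h
    exact h
  -- compare (0,1) entries
  have hent : (Nat.fib ((m + 1) * p) : K) = (Nat.fib (m + 1) : K) * Nat.fib p := by
    have := congrArg (fun B : Matrix (Fin 2) (Fin 2) K => B 0 1) (key2.symm.trans key)
    simp only [hMp] at this
    simpa [hM, ← Matrix.diagonal_natCast, Matrix.mul_apply, Matrix.add_apply,
      Matrix.diagonal_apply, Fin.sum_univ_two] using this
  exact (ZMod.natCast_eq_natCast_iff _ _ _).mp (by push_cast; exact hent)
end

section
/- For any prime p ≠ 5 and any non-negative integer n, F_{n·p²} ≡ F_n (mod p). -/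
open Matrix

section FibAux

variable {p : ℕ}

abbrev FibM (p : ℕ) := Matrix (Fin 2) (Fin 2) (ZMod p)

def Amat (p : ℕ) : FibM p := !![1, 1; 1, 0]

@[simp] lemma Amat00 : Amat p 0 0 = 1 := rfl
@[simp] lemma Amat01 : Amat p 0 1 = 1 := rfl
@[simp] lemma Amat10 : Amat p 1 0 = 1 := rfl
@[simp] lemma Amat11 : Amat p 1 1 = 0 := rfl

lemma Amat_sq : (Amat p) ^ 2 = Amat p + 1 := by
  rw [pow_two]
  ext i j
  fin_cases i <;> fin_cases j <;>
    simp [Matrix.mul_apply, Fin.sum_univ_two, Matrix.one_apply]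

lemma pow_entries (m : ℕ) :
    ((Amat p) ^ m) 0 0 = (Nat.fib (m + 1) : ZMod p) ∧
    ((Amat p) ^ m) 0 1 = (Nat.fib m : ZMod p) := by
  induction m with
  | zero => simp [Matrix.one_apply]
  | succ k ih =>
    rw [pow_succ]
    refine ⟨?_, ?_⟩
    · rw [Matrix.mul_apply, Fin.sum_univ_two, Amat00, Amat10, ih.1, ih.2,
        show k + 1 + 1 = k + 2 from rfl, Nat.fib_add_two]
      push_cast; ring
    · rw [Matrix.mul_apply, Fin.sum_univ_two, Amat01, Amat11, ih.1]
      ring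

lemma pow_aux {R : Type*} [Ring R] (x y : R) (h : Commute x y) (hxx : x * x = x * y) :
    ∀ k, x ^ (k + 1) = y ^ k * x := by
  intro k
  induction k with
  | zero => simp
  | succ m ih =>
    rw [pow_succ, ih, mul_assoc, hxx, h.eq, ← mul_assoc, ← pow_succ]

lemma Amat_pow_p_sq (hp : p.Prime) (hp5 : p ≠ 5) : (Amat p) ^ (p ^ 2) = Amat p := by
  haveI : Fact p.Prime := ⟨hp⟩
  set A := Amat p with hAdef
  have hA2 : A ^ 2 = A + 1 := Amat_sq
  by_cases hp2 : p = 2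
  · subst hp2
    decide
  -- odd case
  have hodd : Odd p := hp.odd_of_ne_two hp2
  have hfrob : ∀ x y : FibM p, Commute x y → (x + y) ^ p = x ^ p + y ^ p := fun x y h =>
    add_pow_char_of_commute _ h
  have h5 : (5 : ZMod p) ≠ 0 := by
    intro h
    have h' : ((5 : ℕ) : ZMod p) = 0 := by exact_mod_cast h
    rw [ZMod.natCast_eq_zero_iff] at h'
    rcases (by norm_num : Nat.Prime 5).eq_one_or_self_of_dvd p h' with h1 | h1
    · exact hp.one_lt.ne' h1
    · exact hp5 h1
  have hhalf : (p - 1) / 2 + (p - 1) / 2 = p - 1 := by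
    obtain ⟨m, hm⟩ := hodd; omega
  set ε : ZMod p := (5 : ZMod p) ^ ((p - 1) / 2) with hεdef
  have hε2 : ε * ε = 1 := by
    rw [hεdef, ← pow_add, hhalf]
    exact ZMod.pow_card_sub_one_eq_one h5
  have hεcases : ε = 1 ∨ ε = -1 := mul_self_eq_one_iff.mp hε2
  set C : ZMod p →+* FibM p := algebraMap (ZMod p) (FibM p) with hCdef
  have hCA : ∀ c : ZMod p, C c * A = A * C c := fun c => Algebra.commutes c A
  have hC5 : C 5 = (5 : FibM p) := by rw [hCdef]; exact map_ofNat _ 5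
  have hpm : p - 1 = 2 * ((p - 1) / 2) := by obtain ⟨m, hm⟩ := hodd; omega
  have hp1 : p - 1 + 1 = p := Nat.succ_pred_eq_of_pos hp.pos
  -- the element t = A^p - A
  set t := A ^ p - A with htdef
  have hAAp : A * A ^ p = A ^ p * A := ((Commute.refl A).pow_right p).eq
  have hAt : Commute A t := ((Commute.refl A).pow_right p).sub_right (Commute.refl A)
  have hApsq : (A ^ p) ^ 2 = A ^ p + 1 := by
    have h1 : (A ^ p) ^ 2 = (A ^ 2) ^ p := by rw [← pow_mul, ← pow_mul, mul_comm]
    rw [h1, hA2, hfrob A 1 (Commute.one_right A), one_pow]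
  set d := (1 : FibM p) - 2 * A with hddef
  have hAd : Commute A d :=
    (Commute.one_right A).sub_right ((Commute.ofNat_right A 2).mul_right (Commute.refl A))
  have htd : Commute t d := (hAd.pow_left p).sub_left hAd
  have htt : t * t = t * d := by
    have expand : t * t - t * d =
        ((A ^ p) ^ 2 - (A ^ p + 1)) - (A ^ 2 - (A + 1)) + (A ^ p * A - A * A ^ p) := by
      rw [htdef, hddef]; noncomm_ring
    rw [hApsq, hA2, hAAp] at expand
    simp only [sub_self, add_zero, zero_add] at expand
    exact sub_eq_zero.mp expand
  have hd2 : d ^ 2 = C 5 := by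
    have e1 : d ^ 2 = 4 * (A ^ 2 - A) + 1 := by rw [hddef]; noncomm_ring
    have e2 : A ^ 2 - A = 1 := by rw [hA2]; abel
    rw [e1, e2, mul_one, hC5]
    norm_num
  have htp : t ^ p = C ε * t := by
    have h1 := pow_aux t d htd htt (p - 1)
    rw [hp1] at h1
    have hd : d ^ (p - 1) = C ε := by
      rw [hpm, pow_mul, hd2, ← _root_.map_pow, hεdef]
    rw [h1, hd]
  rcases hεcases with hE | hE
  · -- ε = 1 : 5 is a square, A^p = A
    have hsq : IsSquare (5 : ZMod p) := by
      rw [ZMod.euler_criterion p h5]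
      have : p / 2 = (p - 1) / 2 := by obtain ⟨m, hm⟩ := hodd; omega
      rw [this, ← hεdef, hE]
    obtain ⟨s, hs⟩ := hsq
    have h2z : (2 : ZMod p) ≠ 0 := by
      intro h
      have h' : ((2 : ℕ) : ZMod p) = 0 := by exact_mod_cast h
      rw [ZMod.natCast_eq_zero_iff] at h'
      exact hp2 ((Nat.prime_dvd_prime_iff_eq hp (by norm_num)).mp h')
    obtain ⟨a, h2a⟩ : ∃ a : ZMod p, a * 2 = 1 + s :=
      ⟨(1 + s) * 2⁻¹, by rw [mul_assoc, inv_mul_cancel₀ h2z, mul_one]⟩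
    have h4z : (4 : ZMod p) ≠ 0 := by
      rw [show (4 : ZMod p) = 2 * 2 by norm_num]
      exact mul_ne_zero h2z h2z
    set e := A - C a with hedef
    have hCe : ∀ c : ZMod p, Commute (C c) e := fun c => by
      rw [hedef]
      exact Commute.sub_right (hCA c)
        (show Commute (C c) (C a) by
          unfold Commute SemiconjBy
          rw [← _root_.map_mul, ← _root_.map_mul, mul_comm])
    have key1 : (2 : FibM p) * C a - C s = 1 := by
      have h' : (2 : ZMod p) * a - s = 1 := by linear_combination h2a
      calc (2 : FibM p) * C a - C s = C (2 * a - s) := by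
            rw [map_sub, _root_.map_mul, map_ofNat]
        _ = 1 := by rw [h', _root_.map_one]
    have hprod : a * a - a * s = -1 := by
      have h' : (4 : ZMod p) * (a * a - a * s) = 4 * (-1) := by
        linear_combination (2 * a - s + 1) * h2a + hs
      exact mul_left_cancel₀ h4z h'
    have key2 : C a * C a - C a * C s = -1 := by
      rw [← _root_.map_mul, ← _root_.map_mul, ← map_sub, hprod, map_neg, _root_.map_one]
    have he0 : e * (e + C s) = 0 := by
      have expand : e * (e + C s) =
          A ^ 2 - ((2 : FibM p) * C a - C s) * A + (C a * C a - C a * C s) +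
            ((C a * A - A * C a) + (A * C s - C s * A)) := by
        rw [hedef]; noncomm_ring
      rw [expand, key1, key2, hCA a, hCA s, hA2]
      noncomm_ring
    have hee : e * e = e * (-C s) := by
      rw [mul_neg]
      rw [mul_add] at he0
      exact eq_neg_of_add_eq_zero_left he0
    have hces : Commute e (-C s) := ((hCe s).symm).neg_right
    have hep : e ^ p = e := by
      have h1 := pow_aux e (-C s) hces hee (p - 1)
      rw [hp1] at h1
      have h2 : (-C s) ^ (p - 1) = C ε := by
        rw [hpm, pow_mul, neg_sq, sq, ← _root_.map_mul, ← hs, ← _root_.map_pow, hεdef]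
      rw [h1, h2, hE, _root_.map_one, one_mul]
    have hap : A ^ p = A := by
      have hAe : A = e + C a := by rw [hedef]; abel
      rw [hAe, hfrob e (C a) (hCe a).symm, hep, ← _root_.map_pow, ZMod.pow_card]
    rw [sq, pow_mul, hap, hap]
  · -- ε = -1
    have hCneg : C (-1) = -1 := by rw [map_neg, _root_.map_one]
    have htp' : t ^ p = -t := by rw [htp, hE, hCneg, neg_one_mul]
    have hApt : A ^ p = A + t := by rw [htdef]; abel
    rw [sq, pow_mul, hApt, hfrob A t hAt, htp', hApt]
    abel

end FibAux

theorem fib_mul_prime_sq_cong (p : ℕ) (hp : p.Prime) (hp5 : p ≠ 5) (n : ℕ) :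
    Nat.fib (n * p ^ 2) ≡ Nat.fib n [MOD p] := by
  haveI : Fact p.Prime := ⟨hp⟩
  have key : (Amat p) ^ (p ^ 2) = Amat p := Amat_pow_p_sq hp hp5
  have h1 : ((Amat p) ^ (n * p ^ 2)) 0 1 = (Nat.fib (n * p ^ 2) : ZMod p) := (pow_entries _).2
  have h2 : ((Amat p) ^ n) 0 1 = (Nat.fib n : ZMod p) := (pow_entries _).2
  have h3 : (Amat p) ^ (n * p ^ 2) = (Amat p) ^ n := by
    rw [mul_comm, pow_mul, key]
  rw [h3, h2] at h1
  exact (ZMod.natCast_eq_natCast_iff _ _ _).mp h1.symm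
end

section
/- For any prime p and any non-negative integer n, 5·F_{n·p²} ≡ 5·F_n (mod p). -/
/-!
Let `α` be a root of `X² - X - 1` in an algebraically closed field of characteristic `p`. Its
conjugate is `1 - α`, and `(2α - 1)² = 5`, so Binet's formula reads
`5 F_n = (2α - 1)(αⁿ - (1 - α)ⁿ)`. Frobenius permutes the two roots, so its square fixes both:
`α^(p²) = α` and `(1 - α)^(p²) = 1 - α`. Hence `5 F_{np²} = 5 F_n` in characteristic `p`.
-/

open Polynomial

section GoldenRoot

variable {R : Type*} [CommRing R] {α : R}

theorem one_sub_sq_eq_add_one (hα : α ^ 2 = α + 1) : (1 - α) ^ 2 = (1 - α) + 1 := by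
  linear_combination hα

theorem two_mul_sub_one_mul_fib (hα : α ^ 2 = α + 1) (n : ℕ) :
    (2 * α - 1) * (Nat.fib n : R) = α ^ n - (1 - α) ^ n := by
  induction n using Nat.twoStepInduction with
  | zero => simp
  | one => ring
  | more n ih₁ ih₂ =>
    rw [Nat.fib_add_two, Nat.cast_add]
    linear_combination ih₁ + ih₂ - (α ^ n - (1 - α) ^ n) * hα

theorem five_mul_fib (hα : α ^ 2 = α + 1) (n : ℕ) :
    (5 : R) * Nat.fib n = (2 * α - 1) * (α ^ n - (1 - α) ^ n) := by
  rw [← two_mul_sub_one_mul_fib hα]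
  linear_combination (-4 : R) * (Nat.fib n : R) * hα

theorem pow_prime_sq_eq_self_of_sq_eq_add_one [NoZeroDivisors R] (p : ℕ) [Fact p.Prime] [CharP R p]
    (hα : α ^ 2 = α + 1) : α ^ p ^ 2 = α := by
  have hαp : (α ^ p) ^ 2 = α ^ p + 1 := by
    rw [pow_right_comm, hα, add_pow_char, one_pow]
  have hroots : (α ^ p - α) * (α ^ p - (1 - α)) = 0 := by
    linear_combination hαp - hα
  rw [sq, pow_mul]
  rcases mul_eq_zero.1 hroots with h | h
  · rw [sub_eq_zero.1 h, sub_eq_zero.1 h]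
  · rw [sub_eq_zero.1 h, sub_pow_char, one_pow, sub_eq_zero.1 h, sub_sub_cancel]

end GoldenRoot

theorem exists_sq_eq_add_one (K : Type*) [Field K] [IsAlgClosed K] : ∃ α : K, α ^ 2 = α + 1 := by
  obtain ⟨α, hα⟩ := IsAlgClosed.exists_root (X ^ 2 - X - 1 : K[X]) (by
    rw [show (X ^ 2 - X - 1 : K[X]).degree = 2 by compute_degree!]
    decide)
  exact ⟨α, by simpa [sub_eq_zero, sub_sub] using hα⟩

theorem five_fib_mul_prime_sq_cong (p : ℕ) (hp : p.Prime) (n : ℕ) :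
    5 * Nat.fib (n * p ^ 2) ≡ 5 * Nat.fib n [MOD p] := by
  have := Fact.mk hp
  let K := AlgebraicClosure (ZMod p)
  obtain ⟨α, hα⟩ := exists_sq_eq_add_one K
  have hαp := pow_prime_sq_eq_self_of_sq_eq_add_one p hα
  have hβp := pow_prime_sq_eq_self_of_sq_eq_add_one p (one_sub_sq_eq_add_one hα)
  refine (CharP.natCast_eq_natCast K p).1 ?_
  rw [Nat.cast_mul, Nat.cast_mul, Nat.cast_ofNat, five_mul_fib hα, five_mul_fib hα, mul_comm n,
    pow_mul, pow_mul, hαp, hβp]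
end

section
/- For any prime p and any positive integers n and k, 5·F_{n·p^{2k}} ≡ 5·F_{n·p^{2(k−1)}} (mod p^k). -/
/-!
In `𝒪 = ℤ[ω]` with `ω² = ω + 1` the coefficient of `ω` in `ω ^ m` is `F_m`, so it suffices that
`p ^ k ∣ 5 (ω ^ e - 1)` with `e = (p² - 1) p^(2(k-1))`, since the two indices differ by `n e`.
For `p ≠ 5`, `√5 = 2ω - 1` satisfies `√5 ^ p² = √5 · (5 ^ (p - 1)) ^ ((p + 1) / 2) ≡ √5 (mod p)`,
so the square of Frobenius fixes `ω` modulo `p` and `p ∣ ω ^ (p² - 1) - 1`; for `p = 5` one has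
`√5 ∣ ω ^ 4 - 1` instead. As in the lifting-the-exponent lemma, each further `p`-th power gains a
factor `p` (resp. `√5`), and `5 = √5 ²` absorbs the missing factor when `p = 5`.
-/

open QuadraticAlgebra

local notation "𝒪" => QuadraticAlgebra ℤ 1 1

section Lifting

variable {R : Type*} [CommRing R] {d y : R} {q : ℕ}

theorem mul_sub_one_dvd_pow_sub_one (hq : d ∣ (q : R)) (hy : d ∣ y - 1) :
    d * (y - 1) ∣ y ^ q - 1 := by
  have hsum : d ∣ ∑ i ∈ Finset.range q, y ^ i * 1 ^ (q - 1 - i) :=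
    (dvd_geom_sum₂_iff_of_dvd_sub hy).2 (by simpa using hq)
  rw [← one_pow q, ← geom_sum₂_mul, one_pow]
  exact mul_dvd_mul_right hsum _

theorem pow_succ_dvd_pow_pow_sub_one (hq : d ∣ (q : R)) (hy : d ∣ y - 1) (j : ℕ) :
    d ^ (j + 1) ∣ y ^ q ^ j - 1 := by
  induction j with
  | zero => simpa using hy
  | succ j ih =>
    rw [pow_succ q j, pow_mul, pow_succ']
    exact (mul_dvd_mul_left d ih).trans
      (mul_sub_one_dvd_pow_sub_one hq ((dvd_pow_self d j.succ_ne_zero).trans ih))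

theorem pow_sub_one_dvd_pow_add_mul_sub_pow (x : R) (N e n : ℕ) :
    x ^ e - 1 ∣ x ^ (N + e * n) - x ^ N := by
  rw [pow_add, pow_mul, ← mul_sub_one]
  exact dvd_mul_of_dvd_right (sub_one_dvd_pow_sub_one _ n) _

end Lifting

theorem pow_prime_sq_eq_self_of_sq_eq_add_one_s13 {A : Type*} [CommRing A] {p : ℕ} [Fact p.Prime]
    [CharP A p] (h5 : p ≠ 5) {x : A} (hx : x ^ 2 = x + 1) : x ^ p ^ 2 = x := by
  obtain rfl | ⟨m, rfl⟩ := (Fact.out : p.Prime).eq_two_or_odd'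
  · have h2 : (2 : A) = 0 := by exact_mod_cast CharP.cast_eq_zero A 2
    linear_combination (x ^ 2 + x + 2) * hx + (x + 1) * h2
  have hfermat : (5 : A) ^ (2 * m) = 1 := by
    have hcop : IsCoprime (5 : ℤ) (2 * m + 1 : ℕ) :=
      Nat.isCoprime_iff_coprime.2 ((Nat.coprime_primes (by norm_num) Fact.out).2 h5.symm)
    simpa using (CharP.intCast_eq_intCast A (2 * m + 1)).2
      (Int.ModEq.pow_card_sub_one_eq_one Fact.out hcop)
  have hsqrt5 : (2 * x - 1) ^ (2 * m + 1) ^ 2 = 2 * x - 1 := by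
    rw [show (2 * m + 1) ^ 2 = 2 * (2 * m * (m + 1)) + 1 by ring, pow_succ, pow_mul,
      show (2 * x - 1) ^ 2 = 5 by linear_combination 4 * hx, pow_mul, hfermat, one_pow, one_mul]
  have hfrob := congrArg (iterateFrobenius A (2 * m + 1) 2) (show 2 * x = 1 + (2 * x - 1) by ring)
  simp only [map_mul, map_add, map_one, map_ofNat, iterateFrobenius_def, hsqrt5] at hfrob
  have hhalf : (2 : A) * (m + 1) = 1 := by
    have hp0 := CharP.cast_eq_zero A (2 * m + 1)
    push_cast at hp0
    linear_combination hp0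
  linear_combination (m + 1 : A) * hfrob - (x ^ (2 * m + 1) ^ 2 - x) * hhalf

theorem omega_sq : (ω : 𝒪) ^ 2 = ω + 1 := by
  ext <;> simp [sq]

theorem omega_pow_succ (m : ℕ) : (ω : 𝒪) ^ (m + 1) = ⟨Nat.fib m, Nat.fib (m + 1)⟩ := by
  induction m with
  | zero => ext <;> simp
  | succ m ih =>
    rw [pow_succ', ih, omega_mul_mk]
    ext <;> simp [Nat.fib_add_two]

theorem im_omega_pow (m : ℕ) : ((ω : 𝒪) ^ m).im = Nat.fib m := by
  cases m with
  | zero => simp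
  | succ m => simp [omega_pow_succ]

theorem natCast_dvd_omega_pow_sub_one {p : ℕ} (hp : p.Prime) (h5 : p ≠ 5) :
    (p : 𝒪) ∣ ω ^ (p ^ 2 - 1) - 1 := by
  have : Fact p.Prime := ⟨hp⟩
  have hnonunit : (p : 𝒪) ∈ nonunits 𝒪 := fun hunit => hp.one_lt.ne' <| by
    have : algebraMap ℤ 𝒪 p ∣ algebraMap ℤ 𝒪 1 := by simpa using isUnit_iff_dvd_one.1 hunit
    exact_mod_cast Int.eq_one_of_dvd_one (by positivity) (algebraMap_dvd_iff_dvd.1 this)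
  have := CharP.quotient 𝒪 p hnonunit
  rw [← Ideal.mem_span_singleton, ← Ideal.Quotient.eq_zero_iff_mem, map_sub, map_pow, map_one,
    sub_eq_zero]
  set x := Ideal.Quotient.mk (Ideal.span {(p : 𝒪)}) ω
  have hx : x ^ 2 = x + 1 := by rw [← map_pow, omega_sq, map_add, map_one]
  have hfix : x ^ (p ^ 2 - 1) * x = x := by
    rw [← pow_succ, Nat.sub_add_cancel (one_le_pow₀ hp.one_le)]
    exact pow_prime_sq_eq_self_of_sq_eq_add_one_s13 h5 hx
  linear_combination (x - 1) * hfix + (1 - x ^ (p ^ 2 - 1)) * hx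

theorem five_pow_succ_dvd_five_mul_omega_pow_sub_one (k : ℕ) :
    (5 : 𝒪) ^ (k + 1) ∣ 5 * ((ω ^ 24) ^ 5 ^ (2 * k) - 1) := by
  have hsqrt5 : (2 * ω - 1 : 𝒪) ^ 2 = 5 := by linear_combination 4 * omega_sq
  have hbase : (2 * ω - 1 : 𝒪) ∣ ω ^ 24 - 1 := by
    refine (Dvd.intro (ω ^ 2) ?_ : (2 * ω - 1 : 𝒪) ∣ ω ^ 4 - 1).trans ?_
    · linear_combination (-ω ^ 2 + ω - 1) * omega_sq
    · rw [show 24 = 4 * 6 from rfl, pow_mul]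
      exact sub_one_dvd_pow_sub_one _ 6
  have hdvd5 : (2 * ω - 1 : 𝒪) ∣ ((5 : ℕ) : 𝒪) := Dvd.intro _ (by rw [← sq, hsqrt5]; norm_num)
  have hlift := pow_succ_dvd_pow_pow_sub_one hdvd5 hbase (2 * k)
  calc (5 : 𝒪) ^ (k + 1) = (2 * ω - 1) * (2 * ω - 1) ^ (2 * k + 1) := by
        rw [← hsqrt5, ← pow_mul, ← pow_succ', mul_add, mul_one]
    _ ∣ (2 * ω - 1) * ((ω ^ 24) ^ 5 ^ (2 * k) - 1) := mul_dvd_mul_left _ hlift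
    _ ∣ 5 * ((ω ^ 24) ^ 5 ^ (2 * k) - 1) := by
        rw [← hsqrt5, sq, mul_assoc]
        exact dvd_mul_left _ _

theorem natCast_pow_succ_dvd_five_mul_omega_pow_sub_one {p : ℕ} (hp : p.Prime) (k : ℕ) :
    (p : 𝒪) ^ (k + 1) ∣ 5 * (ω ^ ((p ^ 2 - 1) * p ^ (2 * k)) - 1) := by
  rw [pow_mul]
  obtain rfl | h5 := eq_or_ne p 5
  · simpa using five_pow_succ_dvd_five_mul_omega_pow_sub_one k
  · exact dvd_mul_of_dvd_right ((pow_dvd_pow _ (by omega)).trans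
      (pow_succ_dvd_pow_pow_sub_one dvd_rfl (natCast_dvd_omega_pow_sub_one hp h5) (2 * k))) 5

theorem dvd_five_mul_fib_sub_of_dvd {d : ℤ} {M N : ℕ} (h : (d : 𝒪) ∣ 5 * (ω ^ M - ω ^ N)) :
    d ∣ 5 * (Nat.fib M : ℤ) - 5 * Nat.fib N := by
  have h' : algebraMap ℤ 𝒪 d ∣ 5 * (ω ^ M - ω ^ N) := by rwa [eq_intCast]
  simpa [im_omega_pow, mul_sub] using (algebraMap_dvd_iff.1 h').2

theorem five_fib_mul_prime_even_power_cong_general (p : ℕ) (hp : p.Prime) (n k : ℕ) :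
    5 * Nat.fib (n * p ^ (2 * k)) ≡ 5 * Nat.fib (n * p ^ (2 * (k - 1))) [MOD p ^ k] := by
  cases k with
  | zero => simp [Nat.modEq_one]
  | succ k =>
  have hexp : n * p ^ (2 * (k + 1)) = n * p ^ (2 * k) + (p ^ 2 - 1) * p ^ (2 * k) * n := by
    zify [one_le_pow₀ (M₀ := ℕ) hp.one_le]
    ring
  have hdvd := (natCast_pow_succ_dvd_five_mul_omega_pow_sub_one hp k).trans
    (mul_dvd_mul_left 5 (pow_sub_one_dvd_pow_add_mul_sub_pow ω (n * p ^ (2 * k)) _ n))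
  rw [← hexp] at hdvd
  refine (Nat.modEq_iff_dvd.2 ?_).symm
  push_cast
  exact dvd_five_mul_fib_sub_of_dvd (by exact_mod_cast hdvd)

theorem five_fib_mul_prime_even_power_cong (p : ℕ) (hp : p.Prime) (n k : ℕ)
    (hn : 0 < n) (hk : 0 < k) :
    5 * Nat.fib (n * p ^ (2 * k)) ≡ 5 * Nat.fib (n * p ^ (2 * (k - 1))) [MOD p ^ k] :=
  five_fib_mul_prime_even_power_cong_general p hp n k
end

section
/- For any positive integer n and any integer k ≥ 3, F_{n·2^{2k}} ≡ F_{n·2^{2(k−1)}} (mod 2^{k+1}). -/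
open Nat

-- key: 2^(k+2) ∣ fib(3·2^k) and 2^(k+1) ∣ fib(3·2^k+1) - 1, for k ≥ 1
lemma fib_key : ∀ k : ℕ, 1 ≤ k →
    (2:ℤ)^(k+2) ∣ (Nat.fib (3 * 2^k) : ℤ) ∧
    (2:ℤ)^(k+1) ∣ (Nat.fib (3 * 2^k + 1) : ℤ) - 1 := by
  intro k hk
  induction k with
  | zero => omega
  | succ k ih =>
    rcases Nat.lt_or_ge k 1 with h | h
    · interval_cases k
      constructor
      · norm_num [show 3 * 2^1 = 6 from rfl]
      · norm_num [show 3 * 2^1 + 1 = 7 from rfl]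
    · obtain ⟨h0, h1⟩ := ih h
      set m := 3 * 2^k with hm
      have h2m : 3 * 2^(k+1) = 2 * m := by rw [hm]; ring
      have hle : Nat.fib m ≤ 2 * Nat.fib (m+1) :=
        le_trans (Nat.fib_le_fib_succ) (by omega)
      have hfib1 : 1 ≤ Nat.fib (m+1) := Nat.fib_pos.2 (by positivity)
      have e1 : (Nat.fib (3 * 2^(k+1)) : ℤ) =
          (Nat.fib m : ℤ) * (2 * (Nat.fib (m+1) : ℤ) - Nat.fib m) := by
        rw [h2m, Nat.fib_two_mul]
        push_cast [hle]
        ring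
      have e2 : (Nat.fib (3 * 2^(k+1) + 1) : ℤ) =
          ((Nat.fib (m+1) : ℤ))^2 + ((Nat.fib m : ℤ))^2 := by
        rw [h2m, Nat.fib_two_mul_add_one]
        push_cast
        ring
      have hodd : (2:ℤ) ∣ (Nat.fib (m+1) : ℤ) + 1 := by
        have h2 : (2:ℤ) ∣ (Nat.fib (m+1) : ℤ) - 1 :=
          (dvd_pow_self (2:ℤ) (Nat.succ_ne_zero k)).trans h1
        obtain ⟨d, hd⟩ := h2
        exact ⟨d + 1, by linarith⟩
      have hfm2 : (2:ℤ) ∣ (Nat.fib m : ℤ) := by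
        have := dvd_trans (pow_dvd_pow (2:ℤ) (show 1 ≤ k+2 by omega)) h0
        simpa using this
      constructor
      · rw [e1, show k+1+2 = (k+2)+1 from rfl, pow_succ]
        exact mul_dvd_mul h0 (by omega)
      · rw [e2]
        have : ((Nat.fib (3 * 2^(k+1) + 1)) : ℤ) - 1 =
            ((Nat.fib (m+1) : ℤ) - 1) * ((Nat.fib (m+1) : ℤ) + 1) + ((Nat.fib m : ℤ))^2 := by
          rw [e2]; ring
        rw [← e2, this]
        apply dvd_add
        · rw [show k+1+1 = (k+1)+1 from rfl, pow_succ]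
          exact mul_dvd_mul h1 hodd
        · have : (2:ℤ)^(k+2) ∣ ((Nat.fib m : ℤ))^2 := h0.trans (dvd_pow_self _ (by norm_num))
          exact dvd_trans (pow_dvd_pow 2 (by omega)) this

lemma fib_period (k : ℕ) (hk : 1 ≤ k) : ∀ t : ℕ,
    (2:ℤ)^(k+1) ∣ (Nat.fib (3 * 2^k * t) : ℤ) ∧
    (2:ℤ)^(k+1) ∣ (Nat.fib (3 * 2^k * t + 1) : ℤ) - 1 := by
  obtain ⟨h0, h1⟩ := fib_key k hk
  have h0' : (2:ℤ)^(k+1) ∣ (Nat.fib (3 * 2^k) : ℤ) :=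
    (pow_dvd_pow 2 (by omega)).trans h0
  set c := 3 * 2^k with hc
  have hc1 : 1 ≤ c := by rw [hc]; have := Nat.one_le_two_pow (n := k); omega
  intro t
  induction t with
  | zero => simp
  | succ t ih =>
    obtain ⟨ih0, ih1⟩ := ih
    constructor
    · have e : c * (t+1) = c * t + (c - 1) + 1 := by rw [Nat.mul_succ]; omega
      rw [e, Nat.fib_add]
      push_cast
      have hcc : c - 1 + 1 = c := by omega
      rw [hcc]
      exact dvd_add (Dvd.dvd.mul_right ih0 _) (Dvd.dvd.mul_left h0' _)
    · have e : c * (t+1) + 1 = c * t + c + 1 := by ring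
      rw [e, Nat.fib_add]
      push_cast
      have : (Nat.fib (c*t) : ℤ) * Nat.fib c + (Nat.fib (c*t+1) : ℤ) * Nat.fib (c+1) - 1 =
          (Nat.fib (c*t) : ℤ) * Nat.fib c + ((Nat.fib (c*t+1) : ℤ) - 1) * Nat.fib (c+1)
          + ((Nat.fib (c+1) : ℤ) - 1) := by ring
      rw [this]
      exact dvd_add (dvd_add (Dvd.dvd.mul_right ih0 _) (Dvd.dvd.mul_right ih1 _)) h1

theorem fib_mul_two_even_power_cong (n k : ℕ) (hn : 0 < n) (hk : 3 ≤ k) :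
    Nat.fib (n * 2 ^ (2 * k)) ≡ Nat.fib (n * 2 ^ (2 * (k - 1))) [MOD 2 ^ (k + 1)] := by
  have hk1 : 1 ≤ k := by omega
  set c := 3 * 2^k with hc
  set a := n * 2 ^ (2 * (k - 1)) with ha
  set t := n * 2 ^ (k - 2) with ht
  have hsplit : n * 2 ^ (2 * k) = a + c * t := by
    rw [ha, ht, hc]
    have e1 : 2 * k = 2 * (k-1) + 2 := by omega
    have e2 : k + (k - 2) = 2 * (k-1) := by omega
    rw [e1]
    rw [show 3 * 2^k * (n * 2^(k-2)) = 3 * n * (2^k * 2^(k-2)) by ring, ← pow_add, e2]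
    ring
  have ha1 : 1 ≤ a := by
    rw [ha]
    have := Nat.one_le_two_pow (n := 2 * (k - 1))
    exact Nat.one_le_iff_ne_zero.2 (by positivity)
  obtain ⟨b, hb⟩ : ∃ b, a = b + 1 := ⟨a - 1, by omega⟩
  obtain ⟨p0, p1⟩ := fib_period k hk1 t
  have key : (2:ℤ)^(k+1) ∣ (Nat.fib (a + c * t) : ℤ) - (Nat.fib a : ℤ) := by
    have e : a + c * t = c * t + b + 1 := by omega
    rw [e, Nat.fib_add, hb]
    push_cast
    have : (Nat.fib (c*t) : ℤ) * Nat.fib b + (Nat.fib (c*t+1) : ℤ) * Nat.fib (b+1)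
        - (Nat.fib (b+1) : ℤ) =
        (Nat.fib (c*t) : ℤ) * Nat.fib b + ((Nat.fib (c*t+1) : ℤ) - 1) * Nat.fib (b+1) := by ring
    rw [this]
    exact dvd_add (Dvd.dvd.mul_right p0 _) (Dvd.dvd.mul_right p1 _)
  rw [hsplit]
  have hle : Nat.fib a ≤ Nat.fib (a + c * t) := Nat.fib_mono (Nat.le_add_right _ _)
  symm
  rw [Nat.modEq_iff_dvd' hle]
  have h : ((2:ℕ)^(k+1) : ℤ) ∣ ((Nat.fib (a + c * t) - Nat.fib a : ℕ) : ℤ) := by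
    push_cast [hle]
    exact_mod_cast key
  exact_mod_cast h
end

section
/- If (A_n) is an increasing sequence of non-negative real numbers with A_{2n} ≥ n·A_n for all n ∈ ℕ, then ∑_{d|n} μ(n/d)·A_d ≥ 0 for all n ∈ ℕ. -/
/-!
For `n > 1` let `p` be the least prime factor of `n` and `m = n / p`. Every proper divisor of `n`
is `n / e` for some `e ≥ p`, hence at most `m`; so there are at most `m` of them and, `A` being
monotone and `|μ| ≤ 1`, together they contribute at least `-m A(m)`. The divisor `d = n` contributes
`A(n) ≥ A(2m) ≥ m A(m)`.
-/

open Finset ArithmeticFunction ArithmeticFunction.Moebius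

namespace Nat

theorem le_div_minFac_of_mem_properDivisors {n d : ℕ} (hd : d ∈ n.properDivisors) :
    d ≤ n / n.minFac := by
  obtain ⟨⟨e, rfl⟩, hlt⟩ := mem_properDivisors.mp hd
  have he : 2 ≤ e := by
    by_contra! h
    interval_cases e <;> simp_all
  calc d = d * e / e := by rw [Nat.mul_div_cancel _ (by omega)]
    _ ≤ d * e / (d * e).minFac :=
      Nat.div_le_div_left (minFac_le_of_dvd he (dvd_mul_left e d)) (minFac_pos _)

theorem card_properDivisors_le_div_minFac (n : ℕ) : #n.properDivisors ≤ n / n.minFac := by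
  calc #n.properDivisors ≤ #(Icc 1 (n / n.minFac)) := by
        refine card_le_card fun d hd => mem_Icc.mpr ⟨?_, le_div_minFac_of_mem_properDivisors hd⟩
        exact pos_of_mem_properDivisors hd
    _ = n / n.minFac := by simp

theorem two_mul_div_minFac_le {n : ℕ} (hn : n ≠ 1) : 2 * (n / n.minFac) ≤ n := by
  calc 2 * (n / n.minFac) ≤ n.minFac * (n / n.minFac) :=
        Nat.mul_le_mul_right _ (minFac_prime hn).two_le
    _ = n := Nat.mul_div_cancel' (minFac_dvd n)

end Nat

theorem neg_le_sum_properDivisors_moebius_mul {A : ℕ → ℝ} (hmono : Monotone A)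
    (hnonneg : ∀ n, 0 ≤ A n) (n : ℕ) :
    -((n / n.minFac : ℕ) * A (n / n.minFac)) ≤ ∑ d ∈ n.properDivisors, (μ (n / d) : ℝ) * A d := by
  set m := n / n.minFac
  have hterm : ∀ d ∈ n.properDivisors, -A m ≤ (μ (n / d) : ℝ) * A d := fun d hd => by
    have hμ : (-1 : ℝ) ≤ μ (n / d) := by exact_mod_cast (abs_le.mp abs_moebius_le_one).1
    have hAd : A d ≤ A m := hmono (Nat.le_div_minFac_of_mem_properDivisors hd)
    nlinarith [hnonneg d]
  have hcard : (#n.properDivisors : ℝ) ≤ m := by exact_mod_cast n.card_properDivisors_le_div_minFac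
  calc -((m : ℝ) * A m) ≤ #n.properDivisors • -A m := by
        rw [nsmul_eq_mul]; nlinarith [hnonneg m]
    _ ≤ _ := card_nsmul_le_sum _ _ _ hterm

theorem div_minFac_mul_le_of_growth {A : ℕ → ℝ} (hmono : Monotone A)
    (hgrowth : ∀ n : ℕ, 0 < n → (n : ℝ) * A n ≤ A (2 * n)) {n : ℕ} (hn : 0 < n) :
    ((n / n.minFac : ℕ) : ℝ) * A (n / n.minFac) ≤ A n := by
  rcases eq_or_ne n 1 with rfl | hn1
  · simp
  calc ((n / n.minFac : ℕ) : ℝ) * A (n / n.minFac) ≤ A (2 * (n / n.minFac)) :=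
        hgrowth _ (Nat.div_pos (Nat.minFac_le hn) (Nat.minFac_pos n))
    _ ≤ A n := hmono (Nat.two_mul_div_minFac_le hn1)

open ArithmeticFunction ArithmeticFunction.Moebius in
theorem moebius_sum_nonneg_of_growth (A : ℕ → ℝ) (hmono : Monotone A)
    (hnonneg : ∀ n, 0 ≤ A n) (hgrowth : ∀ n : ℕ, 0 < n → (n : ℝ) * A n ≤ A (2 * n)) :
    ∀ n : ℕ, 0 < n → 0 ≤ ∑ d ∈ n.divisors, (μ (n / d) : ℝ) * A d := by
  intro n hn
  rw [← Nat.cons_self_properDivisors hn.ne', sum_cons, Nat.div_self hn, moebius_apply_one,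
    Int.cast_one, one_mul]
  linarith [neg_le_sum_properDivisors_moebius_mul hmono hnonneg n,
    div_minFac_mul_le_of_growth hmono hgrowth hn]
end

section
/- For all n ∈ ℕ, 5·F_{(2n)²} ≥ n · 5·F_{n²}, i.e. the sequence φ_n = 5·F_{n²} satisfies φ_{2n} ≥ n·φ_n. -/
theorem Nat.two_pow_mul_fib_le_fib_add_two_mul (k m : ℕ) :
    2 ^ k * Nat.fib m ≤ Nat.fib (m + 2 * k) := by
  induction k with
  | zero => simp
  | succ k ih =>
    calc 2 ^ (k + 1) * Nat.fib m = 2 * (2 ^ k * Nat.fib m) := by ring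
      _ ≤ Nat.fib (m + 2 * k) + Nat.fib (m + 2 * k + 1) := by
        have := Nat.fib_le_fib_succ (n := m + 2 * k)
        omega
      _ = Nat.fib (m + 2 * (k + 1)) := by rw [← Nat.fib_add_two]; ring_nf

theorem five_fib_sq_growth_general (n : ℕ) :
    n * (5 * Nat.fib (n ^ 2)) ≤ 5 * Nat.fib ((2 * n) ^ 2) := by
  calc n * (5 * Nat.fib (n ^ 2)) = 5 * (n * Nat.fib (n ^ 2)) := by ring
    _ ≤ 5 * (2 ^ n * Nat.fib (n ^ 2)) := by gcongr; exact Nat.lt_two_pow_self.le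
    _ ≤ 5 * Nat.fib (n ^ 2 + 2 * n) := by
      gcongr; exact Nat.two_pow_mul_fib_le_fib_add_two_mul n (n ^ 2)
    _ ≤ 5 * Nat.fib ((2 * n) ^ 2) := by gcongr; nlinarith

theorem five_fib_sq_growth (n : ℕ) (hn : 0 < n) :
    n * (5 * Nat.fib (n ^ 2)) ≤ 5 * Nat.fib ((2 * n) ^ 2) :=
  five_fib_sq_growth_general n
end

section
/- The sequence (5·F_{n²}) is realizable: for every n ∈ ℕ, the quantity ∑_{d|n} μ(n/d)·5·F_{d²} is both non-negative and divisible by n. -/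
/-!
Realizability follows from the Dold congruences `U (p ^ (k + 1) * m) ≡ U (p ^ k * m)` modulo
`p ^ (k + 1)`: writing the sum as `∑ d ∣ n, μ d * U (n / d)`, each squarefree divisor `p * d` pairs
with `d`, which turns the sum into a combination of such differences.

For `U d = 5 * F (d ^ 2)` the indices `(p ^ (k + 1) * m) ^ 2` and `(p ^ k * m) ^ 2` differ by
`(p ^ 2 - 1) * p ^ (2 * k) * m ^ 2`. Modulo a prime `p ≠ 5` the Fibonacci matrix `Q` satisfies
`Q ^ (p ^ 2 - 1) = 1` (apply the Frobenius map to `2 * Q = 1 + √5`), and modulo `5` it satisfies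
`Q ^ 20 = 1`; by the binomial theorem a period `T` modulo `p` becomes a period `T * p ^ k` modulo
`p ^ (k + 1)`. The factor `5` covers the remaining case `p = 5`, `k = 0`.

Nonnegativity: `n * F ((n / 2) ^ 2) ≤ F (n ^ 2)` outweighs the proper divisors.
-/

open Finset ArithmeticFunction ArithmeticFunction.Moebius

theorem Nat.le_div_two_of_mem_properDivisors {n d : ℕ} (h : d ∈ n.properDivisors) : d ≤ n / 2 := by
  obtain ⟨⟨c, rfl⟩, hlt⟩ := Nat.mem_properDivisors.mp h
  have hc : 2 ≤ c := by
    by_contra! hc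
    interval_cases c <;> simp at hlt
  rw [Nat.le_div_iff_mul_le two_pos]
  exact Nat.mul_le_mul_left d hc

theorem sum_moebius_mul_nonneg {U : ℕ → ℕ} (hmono : Monotone U)
    (hgrowth : ∀ n, n * U (n / 2) ≤ U n) (n : ℕ) :
    0 ≤ ∑ d ∈ n.divisors, μ (n / d) * (U d : ℤ) := by
  rcases n.eq_zero_or_pos with rfl | hn
  · simp
  rw [← Nat.cons_self_properDivisors hn.ne', sum_cons, Nat.div_self hn, moebius_apply_one, one_mul]
  have hterm : ∀ d ∈ n.properDivisors, -(U (n / 2) : ℤ) ≤ μ (n / d) * U d := fun d hd =>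
    calc -(U (n / 2) : ℤ) ≤ -1 * U d := by
          rw [neg_one_mul, neg_le_neg_iff, Nat.cast_le]
          exact hmono (Nat.le_div_two_of_mem_properDivisors hd)
      _ ≤ μ (n / d) * U d :=
          mul_le_mul_of_nonneg_right (neg_le_of_abs_le abs_moebius_le_one) (Nat.cast_nonneg _)
  have hcard : #n.properDivisors ≤ n := (card_filter_le _ _).trans (by simp)
  calc (0 : ℤ) ≤ U n - n * U (n / 2) := sub_nonneg.mpr (by exact_mod_cast hgrowth n)
    _ ≤ U n - #n.properDivisors * U (n / 2) := by gcongr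
    _ = U n + #n.properDivisors • -(U (n / 2) : ℤ) := by rw [nsmul_eq_mul]; ring
    _ ≤ U n + ∑ d ∈ n.properDivisors, μ (n / d) * (U d : ℤ) :=
          (add_le_add_iff_left _).mpr (card_nsmul_le_sum _ _ _ hterm)

theorem sum_divisors_moebius_mul_eq_sum_filter {p n : ℕ} (hp : p.Prime) (hpn : p ∣ n)
    (g : ℕ → ℤ) :
    ∑ d ∈ n.divisors, μ d * g d = ∑ d ∈ n.divisors with ¬p ∣ d, μ d * (g d - g (p * d)) := by
  have hcop {d : ℕ} (hd : ¬p ∣ d) : p.Coprime d := (Nat.Prime.coprime_iff_not_dvd hp).mpr hd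
  -- the multiples of `p` that are squarefree are exactly `p * d` with `p ∤ d`
  have hmul : ∑ d ∈ n.divisors with p ∣ d, μ d * g d
      = ∑ d ∈ n.divisors with ¬p ∣ d, μ (p * d) * g (p * d) := by
    rw [← sum_image (f := fun x => μ x * g x) fun a _ b _ h => Nat.eq_of_mul_eq_mul_left hp.pos h]
    symm
    apply sum_subset
    · simp only [subset_iff, mem_image, mem_filter, Nat.mem_divisors]
      rintro _ ⟨d, ⟨⟨hdn, hn⟩, hpd⟩, rfl⟩
      exact ⟨⟨(hcop hpd).mul_dvd_of_dvd_of_dvd hpn hdn, hn⟩, dvd_mul_right p d⟩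
    · simp only [mem_image, mem_filter, Nat.mem_divisors, not_exists, not_and]
      rintro _ ⟨⟨hxn, hn⟩, c, rfl⟩ hx
      by_cases hpc : p ∣ c
      · rw [moebius_eq_zero_of_not_squarefree, zero_mul]
        exact fun hsq => hp.one_lt.ne' (Nat.isUnit_iff.mp (hsq p (mul_dvd_mul_left p hpc)))
      · exact absurd rfl (hx c ⟨⟨(Nat.dvd_mul_left c p).trans hxn, hn⟩, hpc⟩)
  rw [← sum_filter_add_sum_filter_not n.divisors (p ∣ ·), hmul, ← sum_add_distrib]
  refine sum_congr rfl fun d hd => ?_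
  rw [isMultiplicative_moebius.map_mul_of_coprime (hcop (mem_filter.mp hd).2),
    moebius_apply_prime hp]
  ring

theorem prime_pow_dvd_sum_moebius_mul {U : ℕ → ℤ} {p k n : ℕ} (hp : p.Prime)
    (hU : ∀ m, (p : ℤ) ^ (k + 1) ∣ U (p ^ (k + 1) * m) - U (p ^ k * m)) (hpn : p ^ (k + 1) ∣ n) :
    (p : ℤ) ^ (k + 1) ∣ ∑ d ∈ n.divisors, μ (n / d) * U d := by
  rcases eq_or_ne n 0 with rfl | hn
  · simp
  have hswap : ∑ d ∈ n.divisors, μ (n / d) * U d = ∑ d ∈ n.divisors, μ d * U (n / d) := by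
    rw [← Nat.sum_div_divisors n]
    exact sum_congr rfl fun d hd => by rw [Nat.div_div_self (Nat.dvd_of_mem_divisors hd) hn]
  rw [hswap, sum_divisors_moebius_mul_eq_sum_filter hp
    ((dvd_pow_self p k.succ_ne_zero).trans hpn)]
  refine dvd_sum fun d hd => dvd_mul_of_dvd_right ?_ _
  obtain ⟨hd, hpd⟩ := mem_filter.mp hd
  have hdn := Nat.dvd_of_mem_divisors hd
  obtain ⟨e, he⟩ : p ^ (k + 1) ∣ n / d :=
    (Nat.Coprime.pow_left _ ((Nat.Prime.coprime_iff_not_dvd hp).mpr hpd)).dvd_of_dvd_mul_right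
      (by rwa [Nat.div_mul_cancel hdn])
  have he' : n / (p * d) = p ^ k * e := by
    rw [mul_comm p d, ← Nat.div_div_eq_div_mul, he, pow_succ', mul_assoc,
      Nat.mul_div_cancel_left _ hp.pos]
  rw [he, he']
  exact hU e

theorem natCast_dvd_sum_moebius_mul {U : ℕ → ℤ}
    (hU : ∀ p k m : ℕ, p.Prime → (p : ℤ) ^ (k + 1) ∣ U (p ^ (k + 1) * m) - U (p ^ k * m)) (n : ℕ) :
    (n : ℤ) ∣ ∑ d ∈ n.divisors, μ (n / d) * U d := by
  rw [Int.natCast_dvd, Nat.dvd_iff_prime_pow_dvd_dvd]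
  rintro p (_ | k) hp hpn
  · simp
  · rw [← Int.natCast_dvd, Nat.cast_pow]
    exact prime_pow_dvd_sum_moebius_mul hp (fun m => hU p k m hp) hpn

theorem natCast_pow_succ_dvd_pow_sub_one {R : Type*} [Ring R] {q k : ℕ} {x : R} (hk : k ≠ 0)
    (h : (q : R) ^ k ∣ x - 1) : (q : R) ^ (k + 1) ∣ x ^ q - 1 := by
  obtain ⟨c, hc⟩ := h
  have hx : x = (q : R) ^ k * c + 1 := by rw [← hc, sub_add_cancel]
  rw [hx, (Commute.one_right _).add_pow, sum_range_succ']
  simp only [one_pow, mul_one, pow_zero, Nat.choose_zero_right, Nat.cast_one, add_sub_cancel_right]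
  refine dvd_sum fun i _ => ?_
  have hnat : q ^ (k + 1) ∣ (q ^ k) ^ (i + 1) * q.choose (i + 1) := by
    rcases i with _ | i
    · simp [pow_succ]
    · rw [← pow_mul]
      exact dvd_mul_of_dvd_left (pow_dvd_pow q (by nlinarith [Nat.pos_of_ne_zero hk])) _
  rw [((Nat.cast_commute q c).pow_left k).mul_pow, mul_assoc,
    ← (Nat.cast_commute _ _).eq, ← mul_assoc]
  exact_mod_cast dvd_mul_of_dvd_left (Nat.cast_dvd_cast (α := R) hnat) _

theorem Matrix.natCast_dvd_iff_map_eq_zero {n : Type*} [Fintype n] [DecidableEq n] {N : ℕ}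
    {A : Matrix n n ℤ} : (N : Matrix n n ℤ) ∣ A ↔ A.map (Int.castRingHom (ZMod N)) = 0 := by
  constructor
  · rintro ⟨C, rfl⟩
    ext i j
    rw [Matrix.map_apply, ← nsmul_eq_mul, Matrix.smul_apply]
    simp
  · intro h
    refine ⟨Matrix.of fun i j => A i j / N, ?_⟩
    ext i j
    have hij : (N : ℤ) ∣ A i j :=
      (ZMod.intCast_zmod_eq_zero_iff_dvd _ _).mp (congrFun (congrFun h i) j)
    rw [← nsmul_eq_mul]
    simp [Int.mul_ediv_cancel' hij]

theorem Matrix.map_intCast_pow_mul_pow_eq_one {n : Type*} [Fintype n] [DecidableEq n]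
    {A : Matrix n n ℤ} {q T : ℕ} (h : A.map (Int.castRingHom (ZMod q)) ^ T = 1) (k : ℕ) :
    A.map (Int.castRingHom (ZMod (q ^ (k + 1)))) ^ (T * q ^ k) = 1 := by
  induction k with
  | zero => rw [zero_add, pow_one, pow_zero, mul_one]; exact h
  | succ k ih =>
    rw [← Matrix.map_pow, ← sub_eq_zero, ← RingHom.mapMatrix_apply,
      ← map_one (Int.castRingHom _).mapMatrix, ← map_sub, RingHom.mapMatrix_apply,
      ← Matrix.natCast_dvd_iff_map_eq_zero] at ih ⊢
    rw [pow_succ q k, ← mul_assoc, pow_mul, Nat.cast_pow]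
    push_cast at ih
    exact natCast_pow_succ_dvd_pow_sub_one (Nat.succ_ne_zero k) ih

def fibMatrix (R : Type*) [Zero R] [One R] : Matrix (Fin 2) (Fin 2) R := !![1, 1; 1, 0]

theorem fibMatrix_map_intCast {R : Type*} [Ring R] :
    (fibMatrix ℤ).map (Int.castRingHom R) = fibMatrix R := by
  ext i j
  fin_cases i <;> fin_cases j <;> simp [fibMatrix]

theorem fibMatrix_pow_succ {R : Type*} [CommSemiring R] (n : ℕ) :
    fibMatrix R ^ (n + 1) =
      !![(Nat.fib (n + 2) : R), Nat.fib (n + 1); Nat.fib (n + 1), Nat.fib n] := by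
  induction n with
  | zero => simp [fibMatrix]
  | succ n ih =>
    rw [pow_succ, ih, fibMatrix, Matrix.mul_fin_two]
    simp only [Nat.fib_add_two (n := n + 1), Nat.fib_add_two (n := n), Nat.cast_add]
    congr 1; ring_nf

theorem fibMatrix_pow_apply_zero_one {R : Type*} [CommSemiring R] (n : ℕ) :
    (fibMatrix R ^ n) 0 1 = Nat.fib n := by
  cases n with
  | zero => simp
  | succ n => simp [fibMatrix_pow_succ]

theorem fibMatrix_mul_sub_one {R : Type*} [Ring R] : fibMatrix R * (fibMatrix R - 1) = 1 := by
  ext i j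
  fin_cases i <;> fin_cases j <;> simp [fibMatrix, Matrix.mul_apply, Fin.sum_univ_two]

theorem fibMatrix_zmod_five_pow_twenty : fibMatrix (ZMod 5) ^ 20 = 1 := by
  rw [fibMatrix_pow_succ 19]
  decide

theorem fibMatrix_pow_sq_eq_self {p : ℕ} (hp : p.Prime) (h2 : p ≠ 2) (h5 : p ≠ 5) :
    fibMatrix (ZMod p) ^ p ^ 2 = fibMatrix (ZMod p) := by
  have : Fact p.Prime := ⟨hp⟩
  have cast_ne_zero (q : ℕ) (hq : q.Prime) (hqp : p ≠ q) : (q : ZMod p) ≠ 0 := fun h =>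
    hqp ((Nat.prime_dvd_prime_iff_eq hp hq).mp ((ZMod.natCast_eq_zero_iff q p).mp h))
  have two_ne_zero : (2 : ZMod p) ≠ 0 := by exact_mod_cast cast_ne_zero 2 Nat.prime_two h2
  have five_ne_zero : (5 : ZMod p) ≠ 0 := by exact_mod_cast cast_ne_zero 5 Nat.prime_five h5
  set Q := fibMatrix (ZMod p)
  set s : Matrix (Fin 2) (Fin 2) (ZMod p) := !![1, 2; 2, -1]
  have hs : s ^ 2 = (5 : ZMod p) • 1 := by
    rw [sq, Matrix.mul_fin_two, Matrix.one_fin_two, Matrix.smul_of]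
    norm_num [Matrix.smul_cons, Matrix.smul_empty]
  have hQ : (2 : ZMod p) • Q = 1 + s := by
    ext i j
    fin_cases i <;> fin_cases j <;> norm_num [Q, s, fibMatrix]
  have hs_pow : s ^ p ^ 2 = s := by
    obtain ⟨r, hr⟩ := hp.odd_of_ne_two h2
    have : p ^ 2 = 2 * ((p - 1) * (r + 1)) + 1 := by
      rw [hr, show 2 * r + 1 - 1 = 2 * r by omega]; ring
    rw [this, pow_succ, pow_mul, hs, smul_pow, one_pow, pow_mul,
      ZMod.pow_card_sub_one_eq_one five_ne_zero, one_pow, one_smul, one_mul]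
  apply smul_right_injective _ two_ne_zero
  calc (2 : ZMod p) • Q ^ p ^ 2 = ((2 : ZMod p) • Q) ^ p ^ 2 := by rw [smul_pow, ZMod.pow_card_pow]
    _ = (2 : ZMod p) • Q := by
      rw [hQ, add_pow_char_pow_of_commute (p := p) (h := Commute.one_left s), one_pow, hs_pow]

theorem fibMatrix_pow_sq_sub_one {p : ℕ} (hp : p.Prime) (h5 : p ≠ 5) :
    fibMatrix (ZMod p) ^ (p ^ 2 - 1) = 1 := by
  rcases eq_or_ne p 2 with rfl | h2
  · decide
  set Q := fibMatrix (ZMod p)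
  calc Q ^ (p ^ 2 - 1) = Q ^ (p ^ 2 - 1) * (Q * (Q - 1)) := by rw [fibMatrix_mul_sub_one, mul_one]
    _ = Q ^ p ^ 2 * (Q - 1) := by
      rw [← mul_assoc, ← pow_succ, Nat.sub_add_cancel (Nat.one_le_pow _ _ hp.pos)]
    _ = 1 := by rw [fibMatrix_pow_sq_eq_self hp h2 h5, fibMatrix_mul_sub_one]

theorem Nat.fib_add_mul_modEq {N T : ℕ} (h : fibMatrix (ZMod N) ^ T = 1) (a j : ℕ) :
    Nat.fib (a + T * j) ≡ Nat.fib a [MOD N] := by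
  rw [← ZMod.natCast_eq_natCast_iff, ← fibMatrix_pow_apply_zero_one,
    ← fibMatrix_pow_apply_zero_one, pow_add, pow_mul, h, one_pow, mul_one]

theorem five_mul_fib_sq_dold_congr {p : ℕ} (hp : p.Prime) (k m : ℕ) :
    (p : ℤ) ^ (k + 1) ∣
      5 * (Nat.fib ((p ^ (k + 1) * m) ^ 2) : ℤ) - 5 * Nat.fib ((p ^ k * m) ^ 2) := by
  rw [← mul_sub]
  by_cases h50 : p = 5 ∧ k = 0
  · obtain ⟨rfl, rfl⟩ := h50
    exact dvd_mul_of_dvd_left (by norm_num) _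
  obtain ⟨T, j, hT, hidx⟩ : ∃ T j, fibMatrix (ZMod p) ^ T = 1 ∧
      (p ^ (k + 1) * m) ^ 2 = (p ^ k * m) ^ 2 + T * p ^ k * j := by
    by_cases h5 : p = 5
    · subst h5
      obtain ⟨k, rfl⟩ : ∃ k', k = k' + 1 := ⟨k - 1, by omega⟩
      exact ⟨20, 6 * 5 ^ k * m ^ 2, fibMatrix_zmod_five_pow_twenty, by ring⟩
    · refine ⟨p ^ 2 - 1, p ^ k * m ^ 2, fibMatrix_pow_sq_sub_one hp h5, ?_⟩
      zify [Nat.one_le_pow 2 p hp.pos]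
      ring
  have hlift : fibMatrix (ZMod (p ^ (k + 1))) ^ (T * p ^ k) = 1 := by
    have := Matrix.map_intCast_pow_mul_pow_eq_one (A := fibMatrix ℤ) (q := p)
      (by rwa [fibMatrix_map_intCast]) k
    rwa [fibMatrix_map_intCast] at this
  refine dvd_mul_of_dvd_right ?_ 5
  rw [hidx, ← Nat.cast_pow]
  exact Nat.modEq_iff_dvd.mp (Nat.fib_add_mul_modEq hlift _ j).symm

theorem Nat.fib_mul_fib_succ_le_fib_add (m n : ℕ) : fib m * fib (n + 1) ≤ fib (m + n) := by
  rcases m with _ | m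
  · simp
  · rw [show m + 1 + n = m + n + 1 by ring, Nat.fib_add]
    exact Nat.le_add_left _ _

theorem Nat.mul_fib_sq_div_two_le (n : ℕ) : n * fib ((n / 2) ^ 2) ≤ fib (n ^ 2) := by
  have hsq : (n / 2) ^ 2 + n ≤ n ^ 2 := by
    rcases Nat.lt_or_ge n 2 with hn | hn
    · interval_cases n <;> simp
    · have hq := Nat.div_mul_le_self n 2
      nlinarith [Nat.mul_le_mul hq hq]
  obtain ⟨c, hc⟩ : ∃ c, n ^ 2 = (n / 2) ^ 2 + (c + n) := ⟨n ^ 2 - (n / 2) ^ 2 - n, by omega⟩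
  calc n * fib ((n / 2) ^ 2) ≤ fib (c + n + 1) * fib ((n / 2) ^ 2) := by
        gcongr
        linarith [Nat.le_fib_add_one (c + n + 1)]
    _ ≤ fib (n ^ 2) := by
      rw [mul_comm, hc]
      exact fib_mul_fib_succ_le_fib_add _ _

open ArithmeticFunction ArithmeticFunction.Moebius in
theorem five_fib_sq_realizable_general (n : ℕ) :
    0 ≤ ∑ d ∈ n.divisors, μ (n / d) * (5 * Nat.fib (d ^ 2)) ∧
    (n : ℤ) ∣ ∑ d ∈ n.divisors, μ (n / d) * (5 * Nat.fib (d ^ 2)) := by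
  refine ⟨?_, natCast_dvd_sum_moebius_mul (fun p k m hp => five_mul_fib_sq_dold_congr hp k m) n⟩
  have hmono : Monotone fun d => 5 * Nat.fib (d ^ 2) := fun a b hab =>
    Nat.mul_le_mul_left 5 (Nat.fib_mono (Nat.pow_le_pow_left hab 2))
  have hgrowth (n : ℕ) : n * (5 * Nat.fib ((n / 2) ^ 2)) ≤ 5 * Nat.fib (n ^ 2) := by
    rw [mul_left_comm]
    exact Nat.mul_le_mul_left 5 (Nat.mul_fib_sq_div_two_le n)
  simpa using sum_moebius_mul_nonneg hmono hgrowth n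

open ArithmeticFunction ArithmeticFunction.Moebius in
theorem five_fib_sq_realizable (n : ℕ) (hn : 0 < n) :
    0 ≤ ∑ d ∈ n.divisors, μ (n / d) * (5 * Nat.fib (d ^ 2)) ∧
    (n : ℤ) ∣ ∑ d ∈ n.divisors, μ (n / d) * (5 * Nat.fib (d ^ 2)) :=
  five_fib_sq_realizable_general n
end

section
/- For every odd integer j ≥ 1 and every odd prime p with p ≡ ±2 (mod 5), F_{p^j} ≡ −1 (mod p); consequently the sequence (F_{n^j}) fails the Dold condition at n = p with denominator exactly p. -/
open Polynomial

local instance fact5' : Fact (Nat.Prime 5) := ⟨by norm_num⟩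

lemma leg52' : legendreSym 5 (2 : ℤ) = -1 := by decide
lemma leg53' : legendreSym 5 (3 : ℤ) = -1 := by decide

lemma five_pow_half (p : ℕ) (hp : p.Prime) (hodd : Odd p)
    (h5 : p % 5 = 2 ∨ p % 5 = 3) : (5 : ZMod p) ^ (p / 2) = -1 := by
  haveI : Fact p.Prime := ⟨hp⟩
  have hp2 : p ≠ 2 := by
    rintro rfl; exact (by decide : ¬ Odd 2) hodd
  have h1 : legendreSym p 5 = legendreSym 5 p :=
    legendreSym.quadratic_reciprocity_one_mod_four (by norm_num) hp2
  have h2 : legendreSym 5 (p : ℤ) = legendreSym 5 ((p % 5 : ℕ) : ℤ) := by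
    conv_lhs => rw [legendreSym.mod]
    congr 1
  have h3 : legendreSym 5 ((p % 5 : ℕ) : ℤ) = -1 := by
    rcases h5 with h | h <;> rw [h]
    · exact leg52'
    · exact leg53'
  have hleg : legendreSym p 5 = -1 := by rw [h1, h2, h3]
  have hpow := legendreSym.eq_pow p (5 : ℤ)
  rw [hleg] at hpow
  have h4 : ((-1 : ℤ) : ZMod p) = ((5 : ℤ) : ZMod p) ^ (p / 2) := hpow
  push_cast at h4
  exact h4.symm

theorem fib_pow_prime_cast (j : ℕ) (hj : Odd j) (p : ℕ) (hp : p.Prime) (hodd : Odd p)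
    (h5 : p % 5 = 2 ∨ p % 5 = 3) : ((Nat.fib (p ^ j) : ZMod p) = -1) := by
  haveI : Fact p.Prime := ⟨hp⟩
  have hp2 : p ≠ 2 := by rintro rfl; exact (by decide : ¬ Odd 2) hodd
  set f : (ZMod p)[X] := X ^ 2 - C 5 with hf
  have hdeg : f.degree = 2 := by
    rw [hf]; exact Polynomial.degree_X_pow_sub_C (by norm_num) 5
  set A := AdjoinRoot f with hA
  set o : ZMod p →+* A := AdjoinRoot.of f with ho
  have hinj : Function.Injective o :=
    AdjoinRoot.of.injective_of_degree_ne_zero (by rw [hdeg]; decide)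
  haveI : CharP A p := charP_of_injective_ringHom hinj p
  set α : A := AdjoinRoot.root f with hα
  have hα2 : α ^ 2 = o 5 := by
    have h := AdjoinRoot.eval₂_root f
    rw [hf] at h
    simp only [eval₂_sub, eval₂_X_pow, eval₂_C] at h
    rw [sub_eq_zero] at h
    exact h
  have h2ne : (2 : ZMod p) ≠ 0 := by
    intro h
    have := (ZMod.natCast_eq_zero_iff 2 p).mp (by push_cast; exact h)
    exact hp2 ((Nat.prime_dvd_prime_iff_eq hp Nat.prime_two).mp this)
  set t : ZMod p := (2 : ZMod p)⁻¹ with htdef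
  have ht2 : t * 2 = 1 := inv_mul_cancel₀ h2ne
  set φ : A := o t * (1 + α) with hφdef
  set ψ : A := o t * (1 - α) with hψdef
  have hot2 : o t * 2 = 1 := by
    rw [show (2 : A) = o 2 from (map_ofNat o 2).symm, ← map_mul, ht2, map_one]
  have hdiff : φ - ψ = α := by
    have h : φ - ψ = o t * 2 * α := by rw [hφdef, hψdef]; ring
    rw [h, hot2, one_mul]
  have hsum : φ + ψ = 1 := by
    have h : φ + ψ = o t * 2 := by rw [hφdef, hψdef]; ring
    rw [h, hot2]
  have hprod : φ * ψ = -1 := by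
    have e1 : φ * ψ = o t * o t * (1 - α ^ 2) := by rw [hφdef, hψdef]; ring
    rw [e1, hα2, show (1 : A) - o 5 = o (1 - 5) by rw [map_sub, map_one],
      show o t * o t * o (1 - 5) = o (t * t * (1 - 5)) by rw [map_mul, map_mul],
      show t * t * (1 - 5) = -1 by linear_combination (-(2*t+1)) * ht2, map_neg, map_one]
  have hφ2 : φ ^ 2 = φ + 1 := by linear_combination φ * hsum - hprod
  have hψ2 : ψ ^ 2 = ψ + 1 := by linear_combination ψ * hsum - hprod
  -- Binet-type identity
  have key : ∀ n : ℕ, ((Nat.fib n : A) * α = φ ^ n - ψ ^ n) ∧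
      ((Nat.fib (n+1) : A) * α = φ ^ (n+1) - ψ ^ (n+1)) := by
    intro n
    induction n with
    | zero =>
      refine ⟨by norm_num, ?_⟩
      norm_num
      linear_combination -hdiff
    | succ n ih =>
      refine ⟨ih.2, ?_⟩
      rw [show n + 1 + 1 = n + 2 from rfl, Nat.fib_add_two]
      push_cast
      linear_combination ih.1 + ih.2 - φ ^ n * hφ2 + ψ ^ n * hψ2
  -- Frobenius
  have hpodd : p = 2 * (p / 2) + 1 := by
    have := Nat.odd_iff.mp hodd; omega
  have hαp : α ^ p = -α := by
    have e : α ^ p = α ^ (2 * (p / 2) + 1) := by congr 1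
    rw [e, pow_succ, pow_mul, hα2, ← map_pow, five_pow_half p hp hodd h5, map_neg, map_one]
    ring
  have hφp : φ ^ p = ψ := by
    rw [hφdef, mul_pow, ← map_pow, ZMod.pow_card, add_pow_char, one_pow, hαp, hψdef]
    ring
  have hψp : ψ ^ p = φ := by
    rw [hψdef, mul_pow, ← map_pow, ZMod.pow_card, sub_pow_char, one_pow, hαp, hφdef]
    ring
  have hiter : ∀ k : ℕ, φ ^ (p ^ (2*k+1)) = ψ ∧ ψ ^ (p ^ (2*k+1)) = φ := by
    intro k
    induction k with
    | zero => simpa using ⟨hφp, hψp⟩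
    | succ k ih =>
      have e : p ^ (2*(k+1)+1) = p ^ (2*k+1) * p * p := by ring
      refine ⟨?_, ?_⟩
      · rw [e, pow_mul, pow_mul, ih.1, hψp, hφp]
      · rw [e, pow_mul, pow_mul, ih.2, hφp, hψp]
  obtain ⟨k, hk⟩ := hj
  have hk' : j = 2 * k + 1 := by omega
  have hkey : (Nat.fib (p ^ j) : A) * α = -α := by
    rw [(key (p ^ j)).1, hk', (hiter k).1, (hiter k).2]
    linear_combination -hdiff
  have h2A : (Nat.fib (p ^ j) : A) * o 5 = -(o 5) := by
    linear_combination α * hkey - ((Nat.fib (p ^ j) : A) + 1) * hα2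
  have h3A : o ((Nat.fib (p ^ j) : ZMod p) * 5) = o ((-1) * 5) := by
    rw [map_mul, map_mul, map_natCast, map_neg, map_one]
    rw [h2A]; ring
  have h4 := hinj h3A
  exact mul_right_cancel₀ (by
    intro h
    have := (ZMod.natCast_eq_zero_iff 5 p).mp (by push_cast; exact h)
    have : p = 5 := (Nat.prime_dvd_prime_iff_eq hp (by norm_num)).mp this
    omega) h4

theorem fib_odd_power_fails_dold (j : ℕ) (hj : Odd j) (hj1 : 1 ≤ j)
    (p : ℕ) (hp : p.Prime) (hodd : Odd p) (h5 : p % 5 = 2 ∨ p % 5 = 3) :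
    ((Nat.fib (p ^ j) : ZMod p) = -1) ∧
    (((Nat.fib (p ^ j) : ℚ) - Nat.fib 1) / p).den = p := by
  haveI : Fact p.Prime := ⟨hp⟩
  have hF := fib_pow_prime_cast j hj p hp hodd h5
  have hp2 : p ≠ 2 := by rintro rfl; exact (by decide : ¬ Odd 2) hodd
  refine ⟨hF, ?_⟩
  have hndvd : ¬ (p : ℤ) ∣ ((Nat.fib (p ^ j) : ℤ) - 1) := by
    intro hdvd
    have h0 : (((Nat.fib (p ^ j) : ℤ) - 1 : ℤ) : ZMod p) = 0 :=
      (ZMod.intCast_zmod_eq_zero_iff_dvd _ p).mpr hdvd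
    push_cast at h0
    rw [hF] at h0
    have h2 : (2 : ZMod p) = 0 := by linear_combination -h0
    have := (ZMod.natCast_eq_zero_iff 2 p).mp (by push_cast; exact h2)
    exact hp2 ((Nat.prime_dvd_prime_iff_eq hp Nat.prime_two).mp this)
  have hppos : (0 : ℤ) < (p : ℤ) := by exact_mod_cast hp.pos
  have hco : Nat.Coprime ((Nat.fib (p ^ j) : ℤ) - 1).natAbs (p : ℤ).natAbs := by
    rw [Int.natAbs_natCast, Nat.coprime_comm]
    refine (Nat.Prime.coprime_iff_not_dvd hp).mpr (fun hd => hndvd ?_)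
    exact Int.dvd_natAbs.mp (Int.natCast_dvd_natCast.mpr hd)
  have hden := Rat.den_div_eq_of_coprime hppos hco
  have hq : ((Nat.fib (p ^ j) : ℚ) - (Nat.fib 1 : ℕ)) / p =
      ((((Nat.fib (p ^ j) : ℤ) - 1 : ℤ) : ℚ) / (((p : ℤ)) : ℚ)) := by
    push_cast [Nat.fib_one]
    ring
  rw [hq]
  exact_mod_cast hden
end
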